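/- arXiv:1610.07874 — 6 statements merged into one kernel-verified Lean document; each statement's English description precedes it below -/
import Mathlib

section
/- Suppose X is an irreducible lazy Markov chain whose associated graph is a tree T. Then there is a universal constant c>0 such that t_mix(X) ≥ c · max_{(S_1,…,S_l)∈𝒮_1(X)} Σ_{i=1}^{l} 1/Φ(S_i). -/
open Finset

noncomputable section

/-- A finite Markov chain together with its (positive) stationary distribution. -/
structure MarkovChain (V : Type) [Fintype V] [DecidableEq V] where
  P : V → V → ℝ
  P_nonneg : ∀ u v, 0 ≤ P u v
  P_rowsum : ∀ u, ∑ v, P u v = 1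
  pi : V → ℝ
  pi_pos : ∀ v, 0 < pi v
  pi_sum : ∑ v, pi v = 1
  pi_stat : ∀ v, ∑ u, pi u * P u v = pi v

/-- A set of vertices `A` is connected (in `G`) if any two of its vertices are joined
by a walk all of whose vertices lie in `A` (vacuously true for `∅`). -/
def ConnIn {V : Type} (G : SimpleGraph V) (A : Set V) : Prop :=
  ∀ u ∈ A, ∀ v ∈ A, ∃ p : G.Walk u v, ∀ x ∈ p.support, x ∈ A

/-- Every vertex of `G` has degree at most `Δ`. -/
def DegLE {V : Type} (G : SimpleGraph V) (Δ : ℕ) : Prop :=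
  ∀ v, {u | G.Adj v u}.ncard ≤ Δ

/-- `𝒞` is a correspondence between `G` and `H` of stretch at most `r`. -/
def CorrespondenceStretchLE {V W : Type} (G : SimpleGraph V) (H : SimpleGraph W)
    (r : ℝ) (𝒞 : Set (V × W)) : Prop :=
  (∀ v, ∃ w, (v, w) ∈ 𝒞) ∧ (∀ w, ∃ v, (v, w) ∈ 𝒞) ∧
    ∀ p ∈ 𝒞, ∀ q ∈ 𝒞,
      (max (G.dist p.1 q.1) (H.dist p.2 q.2) : ℝ) + 1 ≤
        r * ((min (G.dist p.1 q.1) (H.dist p.2 q.2) : ℝ) + 1)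

/-- `G` and `H` are `r`-roughly isometric. -/
def RoughIsom {V W : Type} (G : SimpleGraph V) (H : SimpleGraph W) (r : ℝ) : Prop :=
  ∃ 𝒞 : Set (V × W), CorrespondenceStretchLE G H r 𝒞

namespace MarkovChain

variable {V : Type} [Fintype V] [DecidableEq V] (M : MarkovChain V)

/-- `n`-step transition probabilities. -/
def stepDist : ℕ → V → V → ℝ
  | 0, u, v => if u = v then 1 else 0
  | n + 1, u, v => ∑ w, stepDist n u w * M.P w v

def Irreducible : Prop := ∀ u v, ∃ n, 0 < M.stepDist n u v

def Lazy : Prop := ∀ v, M.P v v = 1 / 2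

def Reversible : Prop := ∀ u v, M.pi u * M.P u v = M.pi v * M.P v u

/-- The graph associated to the chain: `u ∼ v` iff `u ≠ v` and `p uv > 0` or `p vu > 0`. -/
def graph : SimpleGraph V where
  Adj u v := u ≠ v ∧ (0 < M.P u v ∨ 0 < M.P v u)
  symm := ⟨fun u v h => ⟨h.1.symm, h.2.symm⟩⟩
  loopless := ⟨fun v h => h.1 rfl⟩

/-- The chain is `ε`-uniform. -/
def Uniform (ε : ℝ) : Prop :=
  ∀ u v x y, M.graph.Adj u v → M.graph.Adj x y →
    ε * (M.pi x * M.P x y) ≤ M.pi u * M.P u v ∧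
      M.pi u * M.P u v ≤ (M.pi x * M.P x y) / ε

/-- `Q A B = P_π(X₀ ∈ A, X₁ ∈ B)`. -/
def Q (A B : Finset V) : ℝ := ∑ u ∈ A, ∑ v ∈ B, M.pi u * M.P u v

/-- `π(A)`. -/
def piSet (A : Finset V) : ℝ := ∑ v ∈ A, M.pi v

/-- `Φ(A) = Q(A,Aᶜ)/(π(A)π(Aᶜ))`. -/
def Phi (A : Finset V) : ℝ := M.Q A Aᶜ / (M.piSet A * M.piSet Aᶜ)

/-- A subset of the state space is connected if it induces a connected subgraph. -/
def Conn (A : Finset V) : Prop := ConnIn M.graph (A : Set V)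

/-- A `θ`-bottleneck sequence `S 1 ⊆ ⋯ ⊆ S l`. -/
def IsBottleneckSeq (θ : ℝ) (l : ℕ) (S : ℕ → Finset V) : Prop :=
  1 ≤ l ∧ (S 1).Nonempty ∧ S l ≠ Finset.univ ∧
    (∀ j, 1 ≤ j → j < l → S j ⊆ S (j + 1)) ∧
    (∀ j, 1 ≤ j → j ≤ l → M.Conn (S j) ∧ M.Conn (S j)ᶜ) ∧
    (∀ j, 1 ≤ j → j < l → θ * M.Q (S j)ᶜ (S j) ≤ M.Q (S (j + 1) \ S j) (S j))

/-- The maximum, over `θ`-bottleneck sequences, of `∑ j, 1/Φ(S j)`. -/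
def maxBotSum (θ : ℝ) : ℝ :=
  sSup {x | ∃ (l : ℕ) (S : ℕ → Finset V),
    M.IsBottleneckSeq θ l S ∧ x = ∑ j ∈ Finset.Icc 1 l, 1 / M.Phi (S j)}

/-- The maximum, over `1`-bottleneck sequences, of `∑ j, |S j| * |(S j)ᶜ|`. -/
def maxBotCardProd : ℝ :=
  sSup {x | ∃ (l : ℕ) (S : ℕ → Finset V),
    M.IsBottleneckSeq 1 l S ∧
      x = ∑ j ∈ Finset.Icc 1 l, ((S j).card : ℝ) * ((S j)ᶜ.card : ℝ)}

/-- Total variation distance between the time-`n` distribution of the chain started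
at `v`, and the stationary distribution. -/
def tvDist (n : ℕ) (v : V) : ℝ :=
  ⨆ A : Finset V, |∑ u ∈ A, (M.stepDist n v u - M.pi u)|

/-- The total variation mixing time. -/
def tMix : ℕ := sInf {n : ℕ | ∀ v, M.tvDist n v ≤ 1 / 4}

/-- Exit frequencies `x v = E_s[#{k < τ : X_k = v}]` of a stopping rule `τ` from `s`
to `π`.  (By a theorem of Lovász and Winkler, a vector arises this way from some
stopping rule from `s` to `π` iff it is nonnegative and satisfies the balance
equations below; moreover `E_s[τ] = ∑ v, x v`.) -/
def IsExitMeasure (s : V) (x : V → ℝ) : Prop :=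
  (∀ v, 0 ≤ x v) ∧
    ∀ v, (if v = s then (1 : ℝ) else 0) + ∑ u, x u * M.P u v = M.pi v + x v

/-- `inf E_s[τ]` over all stopping rules `τ` from `s` to `π`. -/
def stopTimeFrom (s : V) : ℝ :=
  sInf {E | ∃ x : V → ℝ, M.IsExitMeasure s x ∧ E = ∑ v, x v}

/-- `t_stop = max_s inf E_s[τ]`. -/
def tStop : ℝ := ⨆ s : V, M.stopTimeFrom s

/-- `avoidProb A n v = P_v(H(A) > n)`. -/
def avoidProb (A : Finset V) : ℕ → V → ℝ
  | 0, v => if v ∈ A then 0 else 1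
  | n + 1, v => if v ∈ A then 0 else ∑ w, M.P v w * avoidProb A n w

/-- `E_v[H(A)]`, the expected hitting time of `A` from `v`. -/
def expHit (v : V) (A : Finset V) : ℝ := ∑' n : ℕ, M.avoidProb A n v

/-- `E_v[H⁺(A)]`, where `H⁺(A) = min {n ≥ 1 : X_n ∈ A}`. -/
def expHitPlus (v : V) (A : Finset V) : ℝ :=
  1 + ∑ w, M.P v w * M.expHit w A

/-- `t_hit(δ) = max {E_v[H(A)] : v ∈ V, π(A) ≥ δ}`. -/
def tHit (δ : ℝ) : ℝ :=
  sSup {x | ∃ (v : V) (A : Finset V), δ ≤ M.piSet A ∧ x = M.expHit v A}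

/-- `hitProbLE n v u = P_v(H(u) ≤ n)`. -/
def hitProbLE : ℕ → V → V → ℝ
  | 0, v, u => if v = u then 1 else 0
  | n + 1, v, u => if v = u then 1 else ∑ w, M.P v w * hitProbLE n w u

/-- `v` is `α`-near to `u`: `π(v) P_v(H(u) ≤ 1/α) ≥ α π(u)`. -/
def Near (α : ℝ) (v u : V) : Prop :=
  α * M.pi u ≤ M.pi v * M.hitProbLE ⌊1 / α⌋₊ v u

/-- `A` is `α`-near to `B`: every vertex of `A` is `α`-near to some vertex of `B`. -/
def NearSet (α : ℝ) (A : Set V) (B : Finset V) : Prop :=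
  ∀ v ∈ A, ∃ u ∈ B, M.Near α v u

/-- The inner boundary `∂ⁱ A`. -/
def innerBoundary (A : Finset V) : Set V :=
  {v | v ∈ A ∧ ∃ u, u ∉ A ∧ 0 < M.P u v}

/-- `B` is a `β`-adjustment of `A`. -/
def Adjustment (β : ℝ) (A B : Finset V) : Prop :=
  ∀ S : Finset V, S ⊆ Bᶜ → M.Conn (A ∪ S) →
    β * M.Q (B ∪ S)ᶜ (B ∪ S) ≤ M.Q (B ∪ S)ᶜ (A ∪ S)

/-- A `γ`-valid move for Crawler, from `(C, D)` to `(C', D)`. -/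
def CrawlerMove (γ : ℝ) (C D C' : Finset V) : Prop :=
  C ⊆ C' ∧ C' \ C ⊆ Dᶜ ∧ M.Conn C' ∧ M.Q (D ∪ C')ᶜ C ≤ γ * M.Q Dᶜ C

/-- An `(s,α,β)`-valid move for Dasher, from `(C, D)` to `(C, D')`. -/
def DasherMove (s : V) (α β : ℝ) (C D D' : Finset V) : Prop :=
  D ∪ C ⊆ D' ∧ M.Conn D'ᶜ ∧ M.NearSet α (M.innerBoundary D') C ∧
    M.Adjustment β C D' ∧ (s ∈ D' → (∃ u ∈ C, M.Near α s u) ∧ D' = Finset.univ)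

/-- `((C i, D i), 0 ≤ i ≤ k)` is an `(s,α,β,γ)`-valid sequence. -/
def ValidSeq (s : V) (α β γ : ℝ) (k : ℕ) (C D : ℕ → Finset V) : Prop :=
  C 0 = ∅ ∧ D 0 = ∅ ∧
    ∀ i, i < k → M.CrawlerMove γ (C i) (D i) (C (i + 1)) ∧
      M.DasherMove s α β (C (i + 1)) (D i) (D (i + 1))

/-- `((C i, D i), 0 ≤ i ≤ l + 1)` is an `(s,α,β,γ)`-valid game. -/
def ValidGame (s : V) (α β γ : ℝ) (l : ℕ) (C D : ℕ → Finset V) : Prop :=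
  M.ValidSeq s α β γ (l + 1) C D ∧ D (l + 1) = Finset.univ

end MarkovChain

/-!
On a tree every edge is a bridge, so the chain is reversible and a set `A` with `A` and `Aᶜ`
connected is the side of a single edge `uc`, with `Q(A, Aᶜ) = π(u) p(u,c)`. Fix a target `B`
with `π(B) ≥ 1/2` and let `G` be the Green function of the chain started at `s` and killed on
`B`. Across every edge whose side avoids `B`, `G` carries a net flow of one unit if `s` lies on
that side, and none otherwise; comparing along a path to `B` gives
`G(v)/π(v) ≥ ∑_{A ∋ v} 1/Q(A, Aᶜ)` for any family of such cuts containing `s` and avoiding `B`,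
hence `E_s[H(B)] ≥ ∑_A π(A)/Q(A, Aᶜ)`. Since `B` is hit within `O(t_mix)` expected steps from
anywhere, this bounds `∑ 1/Φ(S_i)` over the sets of mass `≤ 1/2` of a bottleneck sequence;
the complements of the remaining sets are handled in the same way.
-/

namespace SimpleGraph

variable {V : Type} [Fintype V] {G : SimpleGraph V}

open Classical in
noncomputable def side (G : SimpleGraph V) (u w : V) : Finset V :=
  Finset.univ.filter fun x => (G.deleteEdges {s(u, w)}).Reachable x u

lemma mem_side {u w x : V} : x ∈ G.side u w ↔ (G.deleteEdges {s(u, w)}).Reachable x u := by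
  simp [side]

lemma self_mem_side (u w : V) : u ∈ G.side u w :=
  mem_side.2 .rfl

lemma notMem_side (hG : G.IsAcyclic) {u w : V} (hadj : G.Adj u w) : w ∉ G.side u w :=
  fun hw => isBridge_iff.1 (isAcyclic_iff_forall_isBridge.1 hG (show s(u, w) ∈ G.edgeSet from hadj))
    (mem_side.1 hw).symm

lemma eq_of_adj_of_mem_side (hG : G.IsAcyclic) {u w x y : V} (hadj : G.Adj u w)
    (hx : x ∈ G.side u w) (hy : y ∉ G.side u w) (hxy : G.Adj x y) : x = u ∧ y = w := by
  by_cases he : s(x, y) = s(u, w)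
  · rcases Sym2.eq_iff.1 he with ⟨rfl, rfl⟩ | ⟨rfl, rfl⟩
    · exact ⟨rfl, rfl⟩
    · exact absurd hx (notMem_side hG hadj)
  · have hxy' : (G.deleteEdges {s(u, w)}).Adj y x := by
      rw [deleteEdges_adj, Set.mem_singleton_iff, Sym2.eq_swap]
      exact ⟨hxy.symm, he⟩
    exact absurd (mem_side.2 (hxy'.reachable.trans (mem_side.1 hx))) hy

lemma Walk.mem_support_of_mem_side (hG : G.IsAcyclic) {u w x y : V} (hadj : G.Adj u w)
    (p : G.Walk x y) (hx : x ∈ G.side u w) (hy : y ∉ G.side u w) : u ∈ p.support := by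
  obtain ⟨d, hd, hd₁, hd₂⟩ := p.exists_boundary_dart (G.side u w : Set V) hx hy
  rw [← (eq_of_adj_of_mem_side hG hadj hd₁ hd₂ d.adj).1]
  exact p.dart_fst_mem_support_of_mem_darts hd

lemma Walk.notMem_side_of_notMem_support (hG : G.IsAcyclic) {u c t : V} (hadj : G.Adj u c)
    (q : G.Walk c t) (hu : u ∉ q.support) : t ∉ G.side u c := fun ht => by
  refine notMem_side hG hadj (mem_side.2 (.trans ⟨q.toDeleteEdges {s(u, c)} ?_⟩ (mem_side.1 ht)))
  rintro e he rfl
  exact hu (q.fst_mem_support_of_mem_edges he)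

lemma subset_side {A : Finset V} (hA : ConnIn G A) {b a : V} (hb : b ∈ A) (ha : a ∉ A) :
    A ⊆ G.side b a := fun x hx => by
  obtain ⟨p, hp⟩ := hA x hx b hb
  refine mem_side.2 ⟨p.toDeleteEdges {s(b, a)} ?_⟩
  rintro e he rfl
  exact ha (hp a (p.snd_mem_support_of_mem_edges he))

lemma side_eq [DecidableEq V] (hG : G.IsAcyclic) {A : Finset V} (hA : ConnIn G A) (hAc : ConnIn G ↑Aᶜ)
    {b a : V} (hb : b ∈ A) (ha : a ∉ A) (hadj : G.Adj b a) : G.side b a = A := by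
  refine Finset.Subset.antisymm (fun x hx => ?_) (subset_side hA hb ha)
  by_contra hxA
  obtain ⟨p, hp⟩ := hAc x (by simpa using hxA) a (by simpa using ha)
  have := hp b (p.mem_support_of_mem_side hG hadj hx (notMem_side hG hadj))
  simp [hb] at this

lemma disjoint_side_of_notMem (hG : G.IsAcyclic) {B : Finset V} (hB : ConnIn G B)
    {u c t : V} (hadj : G.Adj u c) (hu : u ∉ B) (ht : t ∈ B) (hts : t ∉ G.side u c) :
    Disjoint (G.side u c) B :=
  Finset.disjoint_left.2 fun x hx hxB => by
    obtain ⟨p, hp⟩ := hB x hxB t ht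
    exact hu (hp u (p.mem_support_of_mem_side hG hadj hx hts))

/-- A maximum principle on trees; `Disjoint (G.side u c) B` says that the edge `uc` points
towards `B`. -/
lemma IsTree.nonpos_of_le_toward [DecidableEq V] (hG : G.IsTree) {B : Finset V} (hB : ConnIn G B)
    (hBne : B.Nonempty) {h : V → ℝ}
    (hstep : ∀ u c, G.Adj u c → u ∉ B → Disjoint (G.side u c) B → h u ≤ h c)
    (hle : ∀ t ∈ B, h t ≤ 0) (v : V) : h v ≤ 0 := by
  obtain ⟨t, ht⟩ := hBne
  suffices key : ∀ x (p : G.Walk x t), p.IsPath → h x ≤ 0 by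
    obtain ⟨p⟩ := hG.connected.preconnected v t
    exact key v p.toPath p.toPath.2
  intro x p hp
  induction p with
  | nil => exact hle _ ht
  | @cons u c _ hadj q ih =>
    rw [Walk.cons_isPath_iff] at hp
    by_cases hu : u ∈ B
    · exact hle u hu
    · have hts := q.notMem_side_of_notMem_support hG.isAcyclic hadj hp.2
      exact (hstep u c hadj hu (disjoint_side_of_notMem hG.isAcyclic hB hadj hu ht hts)).trans
        (ih ht hp.1)

end SimpleGraph

lemma MonotoneOn.isChain_image {α β : Type*} [LinearOrder α] [Preorder β] {f : α → β}
    {s : Set α} (hf : MonotoneOn f s) : IsChain (· ≤ ·) (f '' s) := by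
  rintro _ ⟨a, ha, rfl⟩ _ ⟨b, hb, rfl⟩ -
  rcases le_total a b with h | h
  exacts [.inl (hf ha hb h), .inr (hf hb ha h)]

lemma AntitoneOn.isChain_image {α β : Type*} [LinearOrder α] [Preorder β] {f : α → β}
    {s : Set α} (hf : AntitoneOn f s) : IsChain (· ≤ ·) (f '' s) := by
  rintro _ ⟨a, ha, rfl⟩ _ ⟨b, hb, rfl⟩ -
  rcases le_total a b with h | h
  exacts [.inr (hf ha hb h), .inl (hf hb ha h)]

namespace MarkovChain

protected lemma nonempty {V : Type} [Fintype V] [DecidableEq V] (M : MarkovChain V) :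
    Nonempty V := by
  by_contra h
  simpa [Finset.univ_eq_empty_iff.2 (not_nonempty_iff.1 h)] using M.pi_sum

variable {V : Type} [Fintype V] [DecidableEq V] (M : MarkovChain V)

section Mixing

lemma stepDist_nonneg : ∀ (n : ℕ) (u v : V), 0 ≤ M.stepDist n u v
  | 0, u, v => by unfold stepDist; split_ifs <;> norm_num
  | n + 1, u, v => Finset.sum_nonneg fun w _ => mul_nonneg (stepDist_nonneg n u w) (M.P_nonneg w v)

lemma sum_stepDist : ∀ (n : ℕ) (u : V), ∑ v, M.stepDist n u v = 1
  | 0, u => by simp [stepDist]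
  | n + 1, u => by
    simp only [stepDist]
    rw [Finset.sum_comm]
    simp_rw [← Finset.mul_sum, M.P_rowsum, mul_one]
    exact sum_stepDist n u

lemma sum_pi_mul_stepDist (n : ℕ) (v : V) : ∑ u, M.pi u * M.stepDist n u v = M.pi v := by
  induction n generalizing v with
  | zero => simp [stepDist]
  | succ n ih =>
    simp only [stepDist, Finset.mul_sum]
    rw [Finset.sum_comm]
    simp_rw [← mul_assoc, ← Finset.sum_mul, ih]
    exact M.pi_stat v

lemma stepDist_add (m n : ℕ) (u v : V) :
    M.stepDist (m + n) u v = ∑ w, M.stepDist m u w * M.stepDist n w v := by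
  induction n generalizing v with
  | zero => simp [stepDist]
  | succ n ih =>
    show ∑ w, M.stepDist (m + n) u w * M.P w v = _
    simp only [stepDist, ih, Finset.sum_mul, Finset.mul_sum, mul_assoc]
    exact Finset.sum_comm

lemma stepDist_succ' (n : ℕ) (u v : V) :
    M.stepDist (n + 1) u v = ∑ w, M.P u w * M.stepDist n w v := by
  rw [add_comm, M.stepDist_add]
  simp [stepDist]

lemma stepDist_pos_of_le (hl : M.Lazy) {m n : ℕ} (hmn : m ≤ n) {u v : V}
    (h : 0 < M.stepDist m u v) : 0 < M.stepDist n u v := by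
  induction n, hmn using Nat.le_induction with
  | base => exact h
  | succ n _ ih =>
    calc 0 < M.stepDist n u v * M.P v v := by rw [hl v]; positivity
      _ ≤ M.stepDist (n + 1) u v :=
        Finset.single_le_sum (f := fun w => M.stepDist n u w * M.P w v)
          (fun w _ => mul_nonneg (M.stepDist_nonneg n u w) (M.P_nonneg w v)) (Finset.mem_univ v)

lemma exists_minorization (hirr : M.Irreducible) (hl : M.Lazy) :
    ∃ N : ℕ, ∃ δ : ℝ, 0 < δ ∧ ∀ u v, δ * M.pi v ≤ M.stepDist N u v := by
  have := M.nonempty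
  choose n hn using fun p : V × V => hirr p.1 p.2
  set N := Finset.univ.sup n
  have hpos : ∀ u v, 0 < M.stepDist N u v / M.pi v := fun u v =>
    div_pos (M.stepDist_pos_of_le hl (Finset.le_sup (Finset.mem_univ (u, v))) (hn (u, v)))
      (M.pi_pos v)
  obtain ⟨p₀, hp₀⟩ := Finite.exists_min fun p : V × V => M.stepDist N p.1 p.2 / M.pi p.2
  exact ⟨N, _, hpos p₀.1 p₀.2, fun u v => (le_div_iff₀ (M.pi_pos v)).1 (hp₀ (u, v))⟩

lemma abs_sum_stepDist_sub_pi_le {N : ℕ} {δ : ℝ} (hδ : ∀ u v, δ * M.pi v ≤ M.stepDist N u v)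
    (k : ℕ) (u : V) (A : Finset V) :
    |∑ v ∈ A, (M.stepDist (k * N) u v - M.pi v)| ≤ (1 - δ) ^ k := by
  induction k generalizing u with
  | zero =>
    have h1 : ∑ v ∈ A, M.stepDist 0 u v ≤ 1 := by
      simpa [stepDist] using Finset.sum_le_sum_of_subset_of_nonneg (Finset.subset_univ A)
        fun v _ _ => M.stepDist_nonneg 0 u v
    have h2 : ∑ v ∈ A, M.pi v ≤ 1 := M.pi_sum ▸ Finset.sum_le_sum_of_subset_of_nonneg
      (Finset.subset_univ A) fun v _ _ => (M.pi_pos v).le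
    have h3 := Finset.sum_nonneg fun v (_ : v ∈ A) => M.stepDist_nonneg 0 u v
    have h4 := Finset.sum_nonneg fun v (_ : v ∈ A) => (M.pi_pos v).le
    rw [zero_mul, Finset.sum_sub_distrib, pow_zero, abs_le]
    constructor <;> linarith
  | succ k ih =>
    set D : V → ℝ := fun w => ∑ v ∈ A, (M.stepDist (k * N) w v - M.pi v)
    have hlin : ∀ c : V → ℝ, ∑ w, c w * D w =
        ∑ v ∈ A, (∑ w, c w * M.stepDist (k * N) w v - (∑ w, c w) * M.pi v) := fun c => by
      simp only [D, Finset.mul_sum, mul_sub, Finset.sum_sub_distrib, Finset.sum_mul]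
      rw [Finset.sum_comm (s := A), Finset.sum_comm (s := A)]
    -- the `δ π`-part of the `N`-step kernel is already stationary and drops out
    have hstep : ∑ v ∈ A, (M.stepDist ((k + 1) * N) u v - M.pi v) =
        ∑ w, (M.stepDist N u w - δ * M.pi w) * D w := by
      simp only [sub_mul, Finset.sum_sub_distrib, mul_assoc, ← Finset.mul_sum]
      rw [hlin, hlin, show (k + 1) * N = N + k * N by ring]
      simp only [M.sum_pi_mul_stepDist, M.pi_sum, M.sum_stepDist, one_mul, sub_self,
        Finset.sum_const_zero, mul_zero, sub_zero, M.stepDist_add, Finset.sum_sub_distrib]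
    rw [hstep]
    calc |∑ w, (M.stepDist N u w - δ * M.pi w) * D w|
        ≤ ∑ w, (M.stepDist N u w - δ * M.pi w) * (1 - δ) ^ k := by
          refine (Finset.abs_sum_le_sum_abs _ _).trans (Finset.sum_le_sum fun w _ => ?_)
          rw [abs_mul, abs_of_nonneg (sub_nonneg.2 (hδ u w))]
          exact mul_le_mul_of_nonneg_left (ih w) (sub_nonneg.2 (hδ u w))
      _ = (1 - δ) ^ (k + 1) := by
          rw [← Finset.sum_mul, Finset.sum_sub_distrib, ← Finset.mul_sum, M.sum_stepDist,
            M.pi_sum, pow_succ]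
          ring

lemma abs_sum_sub_le_tvDist (n : ℕ) (v : V) (A : Finset V) :
    |∑ u ∈ A, (M.stepDist n v u - M.pi u)| ≤ M.tvDist n v :=
  le_ciSup (f := fun A : Finset V => |∑ u ∈ A, (M.stepDist n v u - M.pi u)|)
    (Set.finite_range _).bddAbove A

lemma exists_forall_tvDist_le (hirr : M.Irreducible) (hl : M.Lazy) :
    ∃ n, ∀ v, M.tvDist n v ≤ 1 / 4 := by
  obtain ⟨N, δ, hδ, hmin⟩ := M.exists_minorization hirr hl
  obtain ⟨k, hk⟩ := exists_pow_lt_of_lt_one (by norm_num : (0 : ℝ) < 1 / 4)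
    (by linarith : 1 - δ < 1)
  exact ⟨k * N, fun v => ciSup_le fun A =>
    (M.abs_sum_stepDist_sub_pi_le hmin k v A).trans hk.le⟩

lemma tvDist_tMix_le (hirr : M.Irreducible) (hl : M.Lazy) (v : V) :
    M.tvDist M.tMix v ≤ 1 / 4 :=
  Nat.sInf_mem (M.exists_forall_tvDist_le hirr hl) v

lemma one_le_tMix [Nontrivial V] (hirr : M.Irreducible) (hl : M.Lazy) : 1 ≤ M.tMix := by
  by_contra! h
  have hstart : ∀ v, 1 - M.pi v ≤ 1 / 4 := fun v => by
    have := (M.abs_sum_sub_le_tvDist 0 v {v}).trans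
      (Nat.lt_one_iff.1 h ▸ M.tvDist_tMix_le hirr hl v)
    simp only [Finset.sum_singleton, stepDist, if_pos, abs_le] at this
    linarith [this.2]
  obtain ⟨v, w, hvw⟩ := exists_pair_ne V
  have := Finset.sum_le_sum_of_subset_of_nonneg (Finset.subset_univ {v, w})
    fun u _ _ => (M.pi_pos u).le
  rw [Finset.sum_pair hvw, M.pi_sum] at this
  linarith [hstart v, hstart w]

end Mixing

section Hitting

variable (B : Finset V)

lemma avoidProb_nonneg : ∀ (n : ℕ) (v : V), 0 ≤ M.avoidProb B n v
  | 0, v => by unfold avoidProb; split_ifs <;> norm_num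
  | n + 1, v => by
    unfold avoidProb
    split_ifs
    exacts [le_rfl, Finset.sum_nonneg fun w _ => mul_nonneg (M.P_nonneg v w) (avoidProb_nonneg n w)]

lemma avoidProb_of_mem (n : ℕ) {v : V} (hv : v ∈ B) : M.avoidProb B n v = 0 := by
  cases n <;> simp [avoidProb, hv]

lemma avoidProb_succ_le : ∀ (n : ℕ) (v : V), M.avoidProb B (n + 1) v ≤ M.avoidProb B n v
  | 0, v => by
    by_cases hv : v ∈ B
    · simp [avoidProb, hv]
    · simp only [avoidProb, if_neg hv]
      calc ∑ w, M.P v w * (if w ∈ B then 0 else 1) ≤ ∑ w, M.P v w :=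
            Finset.sum_le_sum fun w _ => by split_ifs <;> simp [M.P_nonneg v w]
        _ = 1 := M.P_rowsum v
  | n + 1, v => by
    rw [avoidProb, avoidProb]
    split_ifs
    · exact le_rfl
    · exact Finset.sum_le_sum fun w _ =>
        mul_le_mul_of_nonneg_left (avoidProb_succ_le n w) (M.P_nonneg v w)

lemma antitone_avoidProb (v : V) : Antitone fun n => M.avoidProb B n v :=
  antitone_nat_of_succ_le fun n => M.avoidProb_succ_le B n v

lemma avoidProb_add_le (m n : ℕ) (v : V) :
    M.avoidProb B (m + n) v ≤ ∑ w, M.stepDist m v w * M.avoidProb B n w := by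
  induction m generalizing v with
  | zero => simp [stepDist]
  | succ m ih =>
    rw [add_right_comm, avoidProb]
    split_ifs
    · exact Finset.sum_nonneg fun w _ =>
        mul_nonneg (M.stepDist_nonneg _ _ _) (M.avoidProb_nonneg B n w)
    · calc ∑ w, M.P v w * M.avoidProb B (m + n) w
          ≤ ∑ w, M.P v w * ∑ z, M.stepDist m w z * M.avoidProb B n z :=
            Finset.sum_le_sum fun w _ => mul_le_mul_of_nonneg_left (ih w) (M.P_nonneg v w)
        _ = ∑ z, M.stepDist (m + 1) v z * M.avoidProb B n z := by
            simp only [M.stepDist_succ', Finset.mul_sum, Finset.sum_mul, mul_assoc]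
            exact Finset.sum_comm

variable {B} {m : ℕ} {α : ℝ}

lemma avoidProb_mul_le (hB : ∀ v, α ≤ ∑ w ∈ B, M.stepDist m v w) (k : ℕ) (v : V) :
    M.avoidProb B (k * m) v ≤ (1 - α) ^ k := by
  induction k generalizing v with
  | zero =>
    rw [zero_mul, pow_zero, avoidProb]
    split_ifs <;> norm_num
  | succ k ih =>
    have hpow : 0 ≤ (1 - α) ^ k := (M.avoidProb_nonneg B _ v).trans (ih v)
    have hout : ∑ w ∈ Bᶜ, M.stepDist m v w ≤ 1 - α := by
      have := Finset.sum_add_sum_compl B (M.stepDist m v)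
      rw [M.sum_stepDist] at this
      linarith [hB v]
    calc M.avoidProb B ((k + 1) * m) v
        ≤ ∑ w, M.stepDist m v w * M.avoidProb B (k * m) w := by
          rw [add_mul, one_mul, add_comm]
          exact M.avoidProb_add_le B m (k * m) v
      _ = ∑ w ∈ Bᶜ, M.stepDist m v w * M.avoidProb B (k * m) w := by
          rw [← Finset.sum_add_sum_compl B, Finset.sum_eq_zero fun w hw => by
            rw [M.avoidProb_of_mem B _ hw, mul_zero], zero_add]
      _ ≤ ∑ w ∈ Bᶜ, M.stepDist m v w * (1 - α) ^ k :=
          Finset.sum_le_sum fun w _ => mul_le_mul_of_nonneg_left (ih w) (M.stepDist_nonneg _ _ _)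
      _ ≤ (1 - α) * (1 - α) ^ k := by
          rw [← Finset.sum_mul]
          exact mul_le_mul_of_nonneg_right hout hpow
      _ = (1 - α) ^ (k + 1) := (pow_succ' _ _).symm

lemma sum_range_avoidProb_le (hm : 0 < m) (hα : 0 < α) (hB : ∀ v, α ≤ ∑ w ∈ B, M.stepDist m v w)
    (v : V) (K : ℕ) : ∑ n ∈ Finset.range K, M.avoidProb B n v ≤ m / α := by
  have hα1 : α ≤ 1 := (hB v).trans <| M.sum_stepDist m v ▸
    Finset.sum_le_sum_of_subset_of_nonneg (Finset.subset_univ B) fun w _ _ =>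
      M.stepDist_nonneg m v w
  have hblocks : ∀ K, ∑ n ∈ Finset.range (K * m), M.avoidProb B n v ≤
      m * ∑ q ∈ Finset.range K, (1 - α) ^ q := by
    intro K
    induction K with
    | zero => simp
    | succ K ih =>
      rw [add_mul, one_mul, Finset.sum_range_add, Finset.sum_range_succ, mul_add]
      refine add_le_add ih ?_
      calc ∑ x ∈ Finset.range m, M.avoidProb B (K * m + x) v
          ≤ ∑ _x ∈ Finset.range m, (1 - α) ^ K := Finset.sum_le_sum fun x _ =>
            (M.antitone_avoidProb B v (Nat.le_add_right _ x)).trans (M.avoidProb_mul_le hB K v)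
        _ = m * (1 - α) ^ K := by simp
  calc ∑ n ∈ Finset.range K, M.avoidProb B n v
      ≤ ∑ n ∈ Finset.range (K * m), M.avoidProb B n v :=
        Finset.sum_le_sum_of_subset_of_nonneg
          (Finset.range_subset_range.2 (Nat.le_mul_of_pos_right K hm))
          fun n _ _ => M.avoidProb_nonneg B n v
    _ ≤ m * ∑ q ∈ Finset.range K, (1 - α) ^ q := hblocks K
    _ ≤ m * (1 / α) := by
        gcongr
        simpa using geom_sum_Ico_le_of_lt_one (x := 1 - α) (m := 0) (n := K) (by linarith)
          (by linarith)
    _ = m / α := by ring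

lemma summable_avoidProb (hm : 0 < m) (hα : 0 < α) (hB : ∀ v, α ≤ ∑ w ∈ B, M.stepDist m v w)
    (v : V) : Summable fun n => M.avoidProb B n v :=
  summable_of_sum_range_le (M.avoidProb_nonneg B · v) (M.sum_range_avoidProb_le hm hα hB v)

lemma expHit_le (hm : 0 < m) (hα : 0 < α) (hB : ∀ v, α ≤ ∑ w ∈ B, M.stepDist m v w) (v : V) :
    M.expHit v B ≤ m / α :=
  Real.tsum_le_of_sum_range_le (M.avoidProb_nonneg B · v) (M.sum_range_avoidProb_le hm hα hB v)

lemma le_sum_stepDist_tMix (hirr : M.Irreducible) (hl : M.Lazy) (hB : 1 / 2 ≤ M.piSet B)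
    (v : V) : 1 / 4 ≤ ∑ w ∈ B, M.stepDist M.tMix v w := by
  have := (M.abs_sum_sub_le_tvDist M.tMix v B).trans (M.tvDist_tMix_le hirr hl v)
  rw [Finset.sum_sub_distrib, abs_le] at this
  have hpi : M.piSet B = ∑ w ∈ B, M.pi w := rfl
  linarith [this.1]

end Hitting

section Flow

def flow (w : V → ℝ) (A C : Finset V) : ℝ := ∑ x ∈ A, ∑ y ∈ C, w x * M.P x y

lemma flow_sub_flow_compl {w ρ : V → ℝ} {A : Finset V}
    (hw : ∀ y ∈ A, w y = ρ y + ∑ x, w x * M.P x y) :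
    M.flow w A Aᶜ - M.flow w Aᶜ A = ∑ y ∈ A, ρ y := by
  have hout : ∑ x ∈ A, w x = M.flow w A A + M.flow w A Aᶜ := by
    rw [flow, flow, ← Finset.sum_add_distrib]
    refine Finset.sum_congr rfl fun x _ => ?_
    rw [Finset.sum_add_sum_compl, ← Finset.mul_sum, M.P_rowsum, mul_one]
  have hin : ∑ y ∈ A, w y = ∑ y ∈ A, ρ y + (M.flow w A A + M.flow w Aᶜ A) := by
    rw [Finset.sum_congr rfl hw, Finset.sum_add_distrib, flow, flow,
      Finset.sum_comm (s := A) (t := A), Finset.sum_comm (s := Aᶜ) (t := A)]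
    congr 1
    rw [← Finset.sum_add_distrib]
    simp only [Finset.sum_add_sum_compl]
  linarith

lemma Q_compl_comm (A : Finset V) : M.Q A Aᶜ = M.Q Aᶜ A := by
  have := M.flow_sub_flow_compl (w := M.pi) (ρ := fun _ => 0) (A := A) fun y _ =>
    ((M.pi_stat y).symm.trans (zero_add _).symm)
  exact sub_eq_zero.1 (this.trans Finset.sum_const_zero)

lemma Q_nonneg (A C : Finset V) : 0 ≤ M.Q A C :=
  Finset.sum_nonneg fun x _ => Finset.sum_nonneg fun y _ =>
    mul_nonneg (M.pi_pos x).le (M.P_nonneg x y)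

lemma piSet_add_piSet_compl (A : Finset V) : M.piSet A + M.piSet Aᶜ = 1 := by
  rw [piSet, piSet, Finset.sum_add_sum_compl, M.pi_sum]

lemma piSet_nonneg (A : Finset V) : 0 ≤ M.piSet A :=
  Finset.sum_nonneg fun v _ => (M.pi_pos v).le

lemma flow_eq_of_unique {w : V → ℝ} {A : Finset V} {b a : V}
    (hU : ∀ x ∈ A, ∀ y ∉ A, M.P x y ≠ 0 → x = b ∧ y = a) (hb : b ∈ A) (ha : a ∉ A) :
    M.flow w A Aᶜ = w b * M.P b a := by
  have hzero : ∀ x ∈ A, ∀ y ∈ Aᶜ, (x, y) ≠ (b, a) → w x * M.P x y = 0 := fun x hx y hy hxy => by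
    by_contra h
    exact hxy (Prod.ext_iff.2 (hU x hx y (Finset.mem_compl.1 hy) (right_ne_zero_of_mul h)))
  rw [flow, Finset.sum_eq_single_of_mem b hb fun x hx hxb =>
      Finset.sum_eq_zero fun y hy => hzero x hx y hy (by simp [hxb]),
    Finset.sum_eq_single_of_mem a (Finset.mem_compl.2 ha) fun y hy hya =>
      hzero b hb y hy (by simp [hya])]

section Tree

variable {M} (hG : M.graph.IsAcyclic) {u c : V} (hadj : M.graph.Adj u c)
include hG hadj

lemma flow_side (w : V → ℝ) :
    M.flow w (M.graph.side u c) (M.graph.side u c)ᶜ = w u * M.P u c :=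
  M.flow_eq_of_unique (fun x hx y hy hP =>
    SimpleGraph.eq_of_adj_of_mem_side hG hadj hx hy
      ⟨fun h => hy (h ▸ hx), .inl ((M.P_nonneg x y).lt_of_ne' hP)⟩)
    (SimpleGraph.self_mem_side u c) (SimpleGraph.notMem_side hG hadj)

lemma flow_compl_side (w : V → ℝ) :
    M.flow w (M.graph.side u c)ᶜ (M.graph.side u c) = w c * M.P c u := by
  have := M.flow_eq_of_unique (w := w) (A := (M.graph.side u c)ᶜ) (fun x hx y hy hP => ?_)
    (Finset.mem_compl.2 (SimpleGraph.notMem_side hG hadj))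
    (by simpa using SimpleGraph.self_mem_side u c)
  · rwa [compl_compl] at this
  rw [Finset.mem_compl] at hx
  rw [Finset.mem_compl, not_not] at hy
  exact (SimpleGraph.eq_of_adj_of_mem_side hG hadj hy hx
    ⟨fun h => hx (h ▸ hy), .inr ((M.P_nonneg x y).lt_of_ne' hP)⟩).symm

lemma pi_mul_P_comm : M.pi u * M.P u c = M.pi c * M.P c u := by
  rw [← flow_side hG hadj, ← flow_compl_side hG hadj]
  exact M.Q_compl_comm _

lemma P_pos : 0 < M.P u c := by
  rcases hadj.2 with h | h
  · exact h
  · have := pi_mul_P_comm hG hadj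
    have := mul_pos (M.pi_pos c) h
    exact pos_of_mul_pos_right (by linarith) (M.pi_pos u).le

end Tree

lemma Q_pos (hG : M.graph.IsTree) {A : Finset V} (hA : A.Nonempty) (hAc : Aᶜ.Nonempty) :
    0 < M.Q A Aᶜ := by
  obtain ⟨x, hx⟩ := hA
  obtain ⟨y, hy⟩ := hAc
  obtain ⟨p⟩ := hG.connected.preconnected x y
  obtain ⟨d, -, hd₁, hd₂⟩ := p.exists_boundary_dart (A : Set V) hx (by simpa using hy)
  refine Finset.sum_pos' (fun _ _ => Finset.sum_nonneg fun _ _ =>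
    mul_nonneg (M.pi_pos _).le (M.P_nonneg _ _)) ⟨d.fst, hd₁, ?_⟩
  exact Finset.sum_pos' (fun _ _ => mul_nonneg (M.pi_pos _).le (M.P_nonneg _ _))
    ⟨d.snd, by simpa using hd₂, mul_pos (M.pi_pos _) (P_pos hG.isAcyclic d.adj)⟩

end Flow

section Green

def killed (B : Finset V) : Matrix V V ℝ := fun x y => if y ∈ B then 0 else M.P x y

/-- The Green function of the chain started at `s` and killed on `B`: the expected number of
visits to `u` before hitting `B`. -/
def greenFn (s : V) (B : Finset V) (u : V) : ℝ := ∑' n, (M.killed B ^ n) s u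

variable {B : Finset V}

lemma killed_nonneg (x y : V) : 0 ≤ M.killed B x y := by
  unfold killed
  split_ifs
  exacts [le_rfl, M.P_nonneg x y]

lemma killed_pow_nonneg : ∀ (n : ℕ) (x y : V), 0 ≤ (M.killed B ^ n) x y
  | 0, x, y => by rw [pow_zero, Matrix.one_apply]; split_ifs <;> norm_num
  | n + 1, x, y => by
    rw [pow_succ, Matrix.mul_apply]
    exact Finset.sum_nonneg fun w _ => mul_nonneg (killed_pow_nonneg n x w) (M.killed_nonneg w y)

lemma avoidProb_eq_sum_killed_pow :
    ∀ (n : ℕ) (v : V), M.avoidProb B n v = if v ∈ B then 0 else ∑ u, (M.killed B ^ n) v u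
  | 0, v => by simp [avoidProb, Matrix.one_apply]
  | n + 1, v => by
    rw [avoidProb, pow_succ']
    split_ifs
    · rfl
    simp only [Matrix.mul_apply, avoidProb_eq_sum_killed_pow n]
    rw [Finset.sum_comm]
    refine Finset.sum_congr rfl fun w _ => ?_
    rw [← Finset.mul_sum, killed]
    split_ifs <;> simp

variable {s : V} (hs : s ∉ B)
include hs

lemma killed_pow_le_avoidProb (n : ℕ) (u : V) : (M.killed B ^ n) s u ≤ M.avoidProb B n s := by
  rw [avoidProb_eq_sum_killed_pow, if_neg hs]
  exact Finset.single_le_sum (fun w _ => M.killed_pow_nonneg n s w) (Finset.mem_univ u)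

lemma greenFn_of_mem {u : V} (hu : u ∈ B) : M.greenFn s B u = 0 := by
  refine (tsum_congr fun n => ?_).trans tsum_zero
  cases n with
  | zero => exact Matrix.one_apply_ne fun h => hs (h ▸ hu)
  | succ n => simp [pow_succ, Matrix.mul_apply, killed, hu]

variable (hsum : Summable fun n => M.avoidProb B n s)
include hsum

lemma summable_killed_pow (u : V) : Summable fun n => (M.killed B ^ n) s u :=
  hsum.of_nonneg_of_le (M.killed_pow_nonneg · s u) (M.killed_pow_le_avoidProb hs · u)

lemma sum_greenFn : ∑ u, M.greenFn s B u = M.expHit s B := by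
  unfold expHit greenFn
  rw [← Summable.tsum_finsetSum fun u _ => M.summable_killed_pow hs hsum u]
  exact tsum_congr fun n => by rw [avoidProb_eq_sum_killed_pow, if_neg hs]

lemma greenFn_eq {u : V} (hu : u ∉ B) :
    M.greenFn s B u = (if s = u then 1 else 0) + ∑ w, M.greenFn s B w * M.P w u := by
  rw [greenFn, (M.summable_killed_pow hs hsum u).tsum_eq_zero_add]
  simp only [pow_zero, Matrix.one_apply, pow_succ, Matrix.mul_apply, killed, if_neg hu]
  rw [Summable.tsum_finsetSum fun w _ => (M.summable_killed_pow hs hsum w).mul_right _]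
  simp only [greenFn, tsum_mul_right]

lemma greenFn_mul_P_sub (hG : M.graph.IsAcyclic) {u c : V} (hadj : M.graph.Adj u c)
    (hdisj : Disjoint (M.graph.side u c) B) :
    M.greenFn s B u * M.P u c - M.greenFn s B c * M.P c u =
      if s ∈ M.graph.side u c then 1 else 0 := by
  rw [← flow_side hG hadj, ← flow_compl_side hG hadj, M.flow_sub_flow_compl
    fun y hy => M.greenFn_eq hs hsum (Finset.disjoint_left.1 hdisj hy), Finset.sum_ite_eq]

lemma greenFn_div_pi_sub (hG : M.graph.IsAcyclic) {u c : V} (hadj : M.graph.Adj u c)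
    (hdisj : Disjoint (M.graph.side u c) B) :
    M.greenFn s B u / M.pi u - M.greenFn s B c / M.pi c =
      (if s ∈ M.graph.side u c then 1 else 0) / (M.pi u * M.P u c) := by
  have hq := mul_pos (M.pi_pos u) (P_pos hG hadj)
  rw [eq_div_iff hq.ne', ← M.greenFn_mul_P_sub hs hsum hG hadj hdisj, sub_mul]
  congr 1
  · field_simp [(M.pi_pos u).ne']
  · rw [pi_mul_P_comm hG hadj]
    field_simp [(M.pi_pos c).ne']

end Green

section Cuts

def cutPotential (𝒜 : Finset (Finset V)) (v : V) : ℝ :=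
  ∑ A ∈ 𝒜, if v ∈ A then (M.Q A Aᶜ)⁻¹ else 0

/-- Crossing a tree edge `uc` leaves at most one cut of `𝒜`, namely the `u`-side of `uc`. -/
lemma cutPotential_sub_le (hG : M.graph.IsAcyclic) {𝒜 : Finset (Finset V)} {s : V}
    (h𝒜 : ∀ A ∈ 𝒜, M.Conn A ∧ M.Conn Aᶜ ∧ s ∈ A) {u c : V} (hadj : M.graph.Adj u c) :
    M.cutPotential 𝒜 u - M.cutPotential 𝒜 c ≤
      (if s ∈ M.graph.side u c then 1 else 0) / (M.pi u * M.P u c) := by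
  have hcross : ∀ A ∈ 𝒜, u ∈ A → c ∉ A → A = M.graph.side u c := fun A hA hu hc =>
    (SimpleGraph.side_eq hG (h𝒜 A hA).1 (h𝒜 A hA).2.1 hu hc hadj).symm
  calc M.cutPotential 𝒜 u - M.cutPotential 𝒜 c
      ≤ ∑ A ∈ 𝒜 with u ∈ A ∧ c ∉ A, (M.Q A Aᶜ)⁻¹ := by
        rw [cutPotential, cutPotential, ← Finset.sum_sub_distrib, Finset.sum_filter]
        refine Finset.sum_le_sum fun A _ => ?_
        have := inv_nonneg.2 (M.Q_nonneg A Aᶜ)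
        split_ifs <;> simp_all
    _ ≤ (if s ∈ M.graph.side u c then 1 else 0) / (M.pi u * M.P u c) := by
        split_ifs with hs
        · calc ∑ A ∈ 𝒜 with u ∈ A ∧ c ∉ A, (M.Q A Aᶜ)⁻¹
              ≤ ∑ A ∈ {M.graph.side u c}, (M.Q A Aᶜ)⁻¹ :=
                Finset.sum_le_sum_of_subset_of_nonneg
                  (fun A hA => by
                    rw [Finset.mem_filter] at hA
                    exact Finset.mem_singleton.2 (hcross A hA.1 hA.2.1 hA.2.2))
                  fun A _ _ => inv_nonneg.2 (M.Q_nonneg A Aᶜ)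
            _ = 1 / (M.pi u * M.P u c) := by
                rw [Finset.sum_singleton, Q, ← flow, flow_side hG hadj, one_div]
        · rw [Finset.filter_eq_empty_iff.2 fun A hA (h : u ∈ A ∧ c ∉ A) =>
            hs (hcross A hA h.1 h.2 ▸ (h𝒜 A hA).2.2), Finset.sum_empty, zero_div]

lemma sum_piSet_div_Q_le_expHit (hG : M.graph.IsTree) {B : Finset V} (hB : M.Conn B)
    (hBne : B.Nonempty) {s : V} (hs : s ∉ B) (hsum : Summable fun n => M.avoidProb B n s)
    {𝒜 : Finset (Finset V)} (h𝒜 : ∀ A ∈ 𝒜, M.Conn A ∧ M.Conn Aᶜ ∧ s ∈ A ∧ Disjoint A B) :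
    ∑ A ∈ 𝒜, M.piSet A / M.Q A Aᶜ ≤ M.expHit s B := by
  -- both sides vanish on `B`, and along an edge towards `B` the right side drops exactly by
  -- the amount the left side can drop at most
  have hpot : ∀ v, M.cutPotential 𝒜 v ≤ M.greenFn s B v / M.pi v := by
    refine fun v => sub_nonpos.1 (hG.nonpos_of_le_toward hB hBne
      (h := fun v => M.cutPotential 𝒜 v - M.greenFn s B v / M.pi v) ?_ (fun t ht => ?_) v)
    · intro u c hadj _ hdisj
      have := M.greenFn_div_pi_sub hs hsum hG.isAcyclic hadj hdisj
      have := M.cutPotential_sub_le hG.isAcyclic (fun A hA => ⟨(h𝒜 A hA).1, (h𝒜 A hA).2.1,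
        (h𝒜 A hA).2.2.1⟩) hadj
      linarith
    · have : M.cutPotential 𝒜 t = 0 := Finset.sum_eq_zero fun A hA =>
        if_neg (Finset.disjoint_right.1 (h𝒜 A hA).2.2.2 ht)
      simp [this, M.greenFn_of_mem hs ht]
  calc ∑ A ∈ 𝒜, M.piSet A / M.Q A Aᶜ = ∑ v, M.pi v * M.cutPotential 𝒜 v := by
        simp only [cutPotential, piSet, Finset.mul_sum, div_eq_mul_inv, Finset.sum_mul, mul_ite,
          mul_zero]
        rw [Finset.sum_comm]
        exact Finset.sum_congr rfl fun A _ => by rw [Finset.sum_ite_mem, Finset.univ_inter]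
    _ ≤ ∑ v, M.greenFn s B v := Finset.sum_le_sum fun v _ =>
        (le_div_iff₀' (M.pi_pos v)).1 (hpot v)
    _ = M.expHit s B := M.sum_greenFn hs hsum

lemma sum_piSet_div_Q_le_of_isChain (hirr : M.Irreducible) (hl : M.Lazy) (hG : M.graph.IsTree)
    {𝒜 : Finset (Finset V)} (hchain : IsChain (· ≤ ·) (𝒜 : Set (Finset V))) {s : V}
    (h𝒜 : ∀ A ∈ 𝒜, M.Conn A ∧ M.Conn Aᶜ ∧ s ∈ A ∧ M.piSet A ≤ 1 / 2) :
    ∑ A ∈ 𝒜, M.piSet A / M.Q A Aᶜ ≤ 4 * M.tMix := by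
  rcases 𝒜.eq_empty_or_nonempty with rfl | hne
  · simp
  -- the target is the complement of the largest cut
  obtain ⟨D, hD, hmax⟩ := 𝒜.exists_max_image Finset.card hne
  have hsub : ∀ A ∈ 𝒜, A ⊆ D := fun A hA => by
    rcases eq_or_ne A D with rfl | hAD
    · exact subset_rfl
    rcases hchain hA hD hAD with h | h
    exacts [h, (Finset.eq_of_subset_of_card_le h (hmax A hA)).symm ▸ subset_rfl]
  obtain ⟨-, hDc, hsD, hπD⟩ := h𝒜 D hD
  have hB : 1 / 2 ≤ M.piSet Dᶜ := by linarith [M.piSet_add_piSet_compl D]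
  obtain ⟨t, ht⟩ : Dᶜ.Nonempty := Finset.nonempty_iff_ne_empty.2 fun h => by
    rw [h, piSet, Finset.sum_empty] at hB
    norm_num at hB
  have : Nontrivial V := ⟨s, t, fun h => Finset.mem_compl.1 ht (h ▸ hsD)⟩
  have hm : 0 < M.tMix := M.one_le_tMix hirr hl
  have hα := M.le_sum_stepDist_tMix hirr hl hB
  have hs : s ∉ Dᶜ := by simpa using hsD
  calc ∑ A ∈ 𝒜, M.piSet A / M.Q A Aᶜ ≤ M.expHit s Dᶜ :=
        M.sum_piSet_div_Q_le_expHit hG hDc ⟨t, ht⟩ hs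
          (M.summable_avoidProb hm (by norm_num) hα s) fun A hA =>
            ⟨(h𝒜 A hA).1, (h𝒜 A hA).2.1, (h𝒜 A hA).2.2.1,
              disjoint_compl_right.mono_left (hsub A hA)⟩
    _ ≤ M.tMix / (1 / 4) := M.expHit_le hm (by norm_num) hα s
    _ = 4 * M.tMix := by ring

lemma sum_piSet_div_Q_le_of_injOn {ι : Type*} (hirr : M.Irreducible)
    (hl : M.Lazy) (hG : M.graph.IsTree) {J : Finset ι} {T : ι → Finset V} {s : V}
    (hchain : IsChain (· ≤ ·) (T '' J)) (hinj : Set.InjOn T J)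
    (hT : ∀ j ∈ J, M.Conn (T j) ∧ M.Conn (T j)ᶜ ∧ s ∈ T j ∧ M.piSet (T j) ≤ 1 / 2) :
    ∑ j ∈ J, M.piSet (T j) / M.Q (T j) (T j)ᶜ ≤ 4 * M.tMix := by
  refine (Finset.sum_image (f := fun A => M.piSet A / M.Q A Aᶜ) hinj).symm.le.trans ?_
  refine M.sum_piSet_div_Q_le_of_isChain hirr hl hG (by rwa [Finset.coe_image]) (s := s)
    fun A hA => ?_
  obtain ⟨j, hj, rfl⟩ := Finset.mem_image.1 hA
  exact hT j hj

end Cuts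

lemma one_div_Phi_le (A : Finset V) : 1 / M.Phi A ≤ M.piSet A / M.Q A Aᶜ := by
  rw [Phi, one_div_div]
  have := M.piSet_add_piSet_compl A
  exact div_le_div_of_nonneg_right
    (mul_le_of_le_one_right (M.piSet_nonneg A) (by linarith [M.piSet_nonneg A]))
    (M.Q_nonneg A Aᶜ)

lemma one_div_Phi_le_compl (A : Finset V) : 1 / M.Phi A ≤ M.piSet Aᶜ / M.Q Aᶜ Aᶜᶜ := by
  rw [compl_compl, ← M.Q_compl_comm, Phi, one_div_div]
  have := M.piSet_add_piSet_compl A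
  exact div_le_div_of_nonneg_right
    (mul_le_of_le_one_left (M.piSet_nonneg Aᶜ) (by linarith [M.piSet_nonneg Aᶜ]))
    (M.Q_nonneg A Aᶜ)

section Bottleneck

variable {M} {θ : ℝ} {l : ℕ} {S : ℕ → Finset V}

lemma IsBottleneckSeq.monotoneOn (hS : M.IsBottleneckSeq θ l S) : MonotoneOn S (Set.Icc 1 l) :=
  monotoneOn_of_le_add_one Set.ordConnected_Icc fun j _ hj hj1 =>
    hS.2.2.2.1 j hj.1 (Nat.lt_of_succ_le hj1.2)

lemma IsBottleneckSeq.strictMonoOn (hG : M.graph.IsTree) (hθ : 0 < θ)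
    (hS : M.IsBottleneckSeq θ l S) : StrictMonoOn S (Set.Icc 1 l) := by
  refine strictMonoOn_of_lt_add_one Set.ordConnected_Icc fun j _ hj hj1 => ?_
  have hmono := hS.monotoneOn
  obtain ⟨hl1, ⟨s, hs⟩, hSl, hstep, -, hQ⟩ := hS
  have hjl : j < l := Nat.lt_of_succ_le hj1.2
  obtain ⟨t, ht⟩ : ∃ t, t ∉ S l := by simpa [Finset.eq_univ_iff_forall] using hSl
  have hQpos : 0 < M.Q (S j)ᶜ (S j)ᶜᶜ := M.Q_pos hG
    ⟨t, Finset.mem_compl.2 fun h => ht (hmono hj ⟨hl1, le_rfl⟩ hj.2 h)⟩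
    ⟨s, by simpa using hmono ⟨le_rfl, hl1⟩ hj hj.1 hs⟩
  rw [compl_compl] at hQpos
  refine Finset.ssubset_iff_subset_ne.2 ⟨hstep j hj.1 hjl, fun heq => ?_⟩
  have := hQ j hj.1 hjl
  rw [← heq, Finset.sdiff_self, show M.Q ∅ (S j) = 0 from Finset.sum_empty] at this
  nlinarith

end Bottleneck

/-- Splitting the sequence at stationary mass `1/2`, the small sets and the complements of the
large sets form two chains of cuts, each through a common state. -/
lemma sum_one_div_Phi_le (hirr : M.Irreducible) (hl : M.Lazy) (hG : M.graph.IsTree) {l : ℕ}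
    {S : ℕ → Finset V} (hS : M.IsBottleneckSeq 1 l S) :
    ∑ j ∈ Finset.Icc 1 l, 1 / M.Phi (S j) ≤ 8 * M.tMix := by
  set I := Finset.Icc 1 l
  have hmono : MonotoneOn S I := by simpa [I] using hS.monotoneOn
  have hinj : Set.InjOn S I := by simpa [I] using (hS.strictMonoOn hG one_pos).injOn
  obtain ⟨hl1, ⟨s, hs⟩, hSl, -, hconn, -⟩ := hS
  obtain ⟨t, ht⟩ : ∃ t, t ∉ S l := by simpa [Finset.eq_univ_iff_forall] using hSl
  have hI : ∀ j ∈ I, M.Conn (S j) ∧ M.Conn (S j)ᶜ ∧ s ∈ S j ∧ t ∉ S j := fun j hj => by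
    obtain ⟨h1, h2⟩ := Finset.mem_Icc.1 hj
    refine ⟨(hconn j h1 h2).1, (hconn j h1 h2).2, hmono (by simpa [I]) hj h1 hs, fun h => ht ?_⟩
    exact hmono hj (by simpa [I]) h2 h
  set small := I.filter fun j => M.piSet (S j) ≤ 1 / 2
  set large := I.filter fun j => ¬M.piSet (S j) ≤ 1 / 2
  have hsmallI : (small : Set ℕ) ⊆ I := Finset.coe_subset.2 (Finset.filter_subset _ _)
  have hlargeI : (large : Set ℕ) ⊆ I := Finset.coe_subset.2 (Finset.filter_subset _ _)
  have hsmall : ∑ j ∈ small, 1 / M.Phi (S j) ≤ 4 * M.tMix :=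
    (Finset.sum_le_sum fun j _ => M.one_div_Phi_le (S j)).trans <|
      M.sum_piSet_div_Q_le_of_injOn hirr hl hG (hmono.mono hsmallI).isChain_image
        (hinj.mono hsmallI) fun j hj => by
          obtain ⟨hjI, hj⟩ := Finset.mem_filter.1 hj
          exact ⟨(hI j hjI).1, (hI j hjI).2.1, (hI j hjI).2.2.1, hj⟩
  have hlarge : ∑ j ∈ large, 1 / M.Phi (S j) ≤ 4 * M.tMix :=
    (Finset.sum_le_sum fun j _ => M.one_div_Phi_le_compl (S j)).trans <|
      M.sum_piSet_div_Q_le_of_injOn hirr hl hG (T := fun j => (S j)ᶜ)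
        (AntitoneOn.isChain_image fun i hi j hj hij =>
          Finset.compl_subset_compl.2 (hmono.mono hlargeI hi hj hij))
        (compl_injective.comp_injOn (hinj.mono hlargeI)) fun j hj => by
          obtain ⟨hjI, hj⟩ := Finset.mem_filter.1 hj
          refine ⟨(hI j hjI).2.1, by simpa using (hI j hjI).1, by simpa using (hI j hjI).2.2.2, ?_⟩
          linarith [M.piSet_add_piSet_compl (S j)]
  rw [← Finset.sum_filter_add_sum_filter_not I fun j => M.piSet (S j) ≤ 1 / 2]
  linarith

end MarkovChain

/-- **Proposition 3.1.** If `X` is an irreducible lazy Markov chain on a tree, then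
`t_mix(X) ≳ max_{(S_1,…,S_l) ∈ 𝒮_1(X)} ∑_i 1/Φ(S_i)` for a universal constant. -/
theorem tree_lower_bound :
    ∃ c : ℝ, 0 < c ∧
      ∀ (V : Type) [Fintype V] [DecidableEq V] (X : MarkovChain V),
        X.Irreducible → X.Lazy → X.graph.IsTree →
        c * X.maxBotSum 1 ≤ (X.tMix : ℝ) := by
  refine ⟨1 / 8, by norm_num, fun V _ _ X hirr hl hG => ?_⟩
  have hbound : X.maxBotSum 1 ≤ 8 * X.tMix :=
    Real.sSup_le (by rintro _ ⟨l, S, hS, rfl⟩; exact X.sum_one_div_Phi_le hirr hl hG hS)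
      (by positivity)
  linarith
end
end

section
/- Let X be an irreducible lazy Markov chain on a finite state space V with stationary distribution π, let s∈V, let τ be a stopping rule from s to π, and let y_v be the scaled exit frequencies of τ. Then for every Z⊂V with s∉Z, π(Z) = Σ_{u∉Z, v∈Z} (y_u Q(u,v) − y_v Q(v,u)). -/
open Finset

noncomputable section

namespace MarkovChain

variable {V : Type} [Fintype V] [DecidableEq V] (M : MarkovChain V)

theorem div_pi_mul_pi_mul (x : V → ℝ) (u v : V) :
    x u / M.pi u * (M.pi u * M.P u v) = x u * M.P u v := by
  rw [← mul_assoc, div_mul_cancel₀ _ (M.pi_pos u).ne']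

/-- Writing `x v = ∑ u, x v * P v u`, the flow between two vertices of `Z` cancels. -/
theorem sum_inflow_sub_eq_sum_boundary_flow (x : V → ℝ) (Z : Finset V) :
    ∑ v ∈ Z, (∑ u, x u * M.P u v - x v) =
      ∑ u ∈ Zᶜ, ∑ v ∈ Z, (x u * M.P u v - x v * M.P v u) := by
  have hin : ∀ v, ∑ u, x u * M.P u v = ∑ u ∈ Z, x u * M.P u v + ∑ u ∈ Zᶜ, x u * M.P u v :=
    fun v => (sum_add_sum_compl Z _).symm
  have hout : ∀ v, ∑ u ∈ Z, x v * M.P v u + ∑ u ∈ Zᶜ, x v * M.P v u = x v := fun v => by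
    rw [sum_add_sum_compl, ← mul_sum, M.P_rowsum, mul_one]
  calc ∑ v ∈ Z, (∑ u, x u * M.P u v - x v)
      = ∑ v ∈ Z, ((∑ u ∈ Z, x u * M.P u v + ∑ u ∈ Zᶜ, x u * M.P u v) -
          (∑ u ∈ Z, x v * M.P v u + ∑ u ∈ Zᶜ, x v * M.P v u)) :=
        sum_congr rfl fun v _ => by rw [hin, hout]
    _ = ∑ v ∈ Z, ∑ u ∈ Zᶜ, (x u * M.P u v - x v * M.P v u) +
          (∑ v ∈ Z, ∑ u ∈ Z, x u * M.P u v - ∑ v ∈ Z, ∑ u ∈ Z, x v * M.P v u) := by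
        simp only [sum_sub_distrib, sum_add_distrib]
        ring
    _ = ∑ u ∈ Zᶜ, ∑ v ∈ Z, (x u * M.P u v - x v * M.P v u) := by
        rw [sum_comm (s := Z) (t := Z) (f := fun v u => x u * M.P u v), sub_self, add_zero,
          sum_comm]

variable {M} in
theorem IsExitMeasure.piSet_eq {s : V} {x : V → ℝ} (hx : M.IsExitMeasure s x)
    {Z : Finset V} (hsZ : s ∉ Z) :
    M.piSet Z = ∑ v ∈ Z, (∑ u, x u * M.P u v - x v) := by
  refine sum_congr rfl fun v hv => ?_
  have hbal := hx.2 v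
  rw [if_neg (ne_of_mem_of_not_mem hv hsZ)] at hbal
  linarith

end MarkovChain

theorem exit_frequency_identity_general {V : Type} [Fintype V] [DecidableEq V]
    (X : MarkovChain V)
    (s : V) (x : V → ℝ) (hx : X.IsExitMeasure s x)
    (Z : Finset V) (hsZ : s ∉ Z) :
    X.piSet Z = ∑ u ∈ Zᶜ, ∑ v ∈ Z,
      ((x u / X.pi u) * (X.pi u * X.P u v) - (x v / X.pi v) * (X.pi v * X.P v u)) := by
  simp only [X.div_pi_mul_pi_mul]
  rw [hx.piSet_eq hsZ, X.sum_inflow_sub_eq_sum_boundary_flow]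

/-- **Lemma 4.2.** If `x` are the exit frequencies of a stopping rule from `s` to
`π`, with scaled exit frequencies `y v = x v / π v`, then for every `Z ⊆ V` with
`s ∉ Z`, `π(Z) = ∑_{u ∉ Z, v ∈ Z} (y_u Q(u,v) - y_v Q(v,u))`. -/
theorem exit_frequency_identity {V : Type} [Fintype V] [DecidableEq V]
    (X : MarkovChain V) (hirr : X.Irreducible) (hlazy : X.Lazy)
    (s : V) (x : V → ℝ) (hx : X.IsExitMeasure s x)
    (Z : Finset V) (hsZ : s ∉ Z) :
    X.piSet Z = ∑ u ∈ Zᶜ, ∑ v ∈ Z,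
      ((x u / X.pi u) * (X.pi u * X.P u v) - (x v / X.pi v) * (X.pi v * X.P v u)) :=
  exit_frequency_identity_general X s x hx Z hsZ
end
end

section
/- Let G be a finite connected graph, T a finite tree, and 𝒞⊂V(T)×V(G) a correspondence with stretch at most r, and for t∈V(T) let A_t = B_G(r(r+1), 𝒞_{t,G}). Then for all t∈V(T), the set A_t induces a connected subgraph of G; moreover, for all u,v∈A_t there is a path from u to v contained within A_t of length at most 2r(r+1)+(r−1). -/
open Finset

noncomputable section

/-
Two vertices corresponding to the same `t` have `T`-distance `0`, so the stretch bound puts them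
at `G`-distance at most `r - 1`. Hence `A_t` is the `ρ`-neighbourhood of a set of diameter
`δ = r - 1 ≤ ρ = r(r+1)`, and for `u, v` within `ρ` of `a, b` the concatenated geodesics
`u → a → b → v` stay in that neighbourhood and have length at most `2ρ + δ`.
-/

namespace SimpleGraph

variable {V : Type} {G : SimpleGraph V}

/-- The closed `ρ`-neighbourhood `B_G(ρ, S)` of a set of vertices. -/
def cthickening (G : SimpleGraph V) (S : Set V) (ρ : ℝ) : Set V :=
  {v | ∃ a ∈ S, (G.dist v a : ℝ) ≤ ρ}

lemma Walk.dist_le_length_of_mem_support {u v w : V} (p : G.Walk u v) (hw : w ∈ p.support) :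
    G.dist w v ≤ p.length := by
  classical
  exact (dist_le (p.dropUntil w hw)).trans (p.length_dropUntil_le_length hw)

lemma Walk.mem_cthickening_of_mem_support {S : Set V} {ρ : ℝ} {u a : V} (p : G.Walk u a)
    (ha : a ∈ S) (hp : (p.length : ℝ) ≤ ρ) : ∀ w ∈ p.support, w ∈ G.cthickening S ρ :=
  fun _ hw => ⟨a, ha, le_trans (by exact_mod_cast p.dist_le_length_of_mem_support hw) hp⟩

lemma Connected.exists_walk_within_cthickening (hG : G.Connected) {S : Set V} {ρ δ : ℝ}
    (hδρ : δ ≤ ρ) (hS : ∀ a ∈ S, ∀ b ∈ S, (G.dist a b : ℝ) ≤ δ)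
    {u v : V} (hu : u ∈ G.cthickening S ρ) (hv : v ∈ G.cthickening S ρ) :
    ∃ p : G.Walk u v, (∀ w ∈ p.support, w ∈ G.cthickening S ρ) ∧
      (p.length : ℝ) ≤ 2 * ρ + δ := by
  obtain ⟨a, ha, hua⟩ := hu
  obtain ⟨b, hb, hvb⟩ := hv
  obtain ⟨p, hp⟩ := hG.exists_walk_length_eq_dist u a
  obtain ⟨q, hq⟩ := hG.exists_walk_length_eq_dist a b
  obtain ⟨s, hs⟩ := hG.exists_walk_length_eq_dist v b
  have hab := hS a ha b hb
  refine ⟨p.append (q.append s.reverse), ?_, ?_⟩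
  · intro w hw
    simp only [Walk.mem_support_append_iff, Walk.support_reverse, List.mem_reverse] at hw
    rcases hw with hw | hw | hw
    · exact p.mem_cthickening_of_mem_support ha (by rwa [hp]) w hw
    · exact q.mem_cthickening_of_mem_support hb (by rw [hq]; linarith) w hw
    · exact s.mem_cthickening_of_mem_support hb (by rwa [hs]) w hw
  · simp only [Walk.length_append, Walk.length_reverse, hp, hq, hs]
    push_cast
    linarith

end SimpleGraph

lemma CorrespondenceStretchLE.dist_le_sub_one_of_mem {VT VG : Type} {T : SimpleGraph VT}
    {G : SimpleGraph VG} {r : ℝ} {𝒞 : Set (VT × VG)} (h𝒞 : CorrespondenceStretchLE T G r 𝒞)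
    {t : VT} {u v : VG} (hu : (t, u) ∈ 𝒞) (hv : (t, v) ∈ 𝒞) : (G.dist u v : ℝ) ≤ r - 1 := by
  have h := h𝒞.2.2 _ hu _ hv
  rw [SimpleGraph.dist_self, Nat.cast_zero, max_eq_right (Nat.cast_nonneg _),
    min_eq_left (Nat.cast_nonneg _)] at h
  linarith

theorem ball_of_correspondence_connected_general (VG VT : Type)
    (G : SimpleGraph VG) (T : SimpleGraph VT) (hG : G.Connected)
    (r : ℝ) (𝒞 : Set (VT × VG)) (h𝒞 : CorrespondenceStretchLE T G r 𝒞)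
    (t : VT) (At : Set VG)
    (hAt : At = {v | ∃ u, (t, u) ∈ 𝒞 ∧ (G.dist v u : ℝ) ≤ r * (r + 1)}) :
    ConnIn G At ∧
      ∀ u ∈ At, ∀ v ∈ At, ∃ p : G.Walk u v,
        (∀ w ∈ p.support, w ∈ At) ∧ (p.length : ℝ) ≤ 2 * (r * (r + 1)) + (r - 1) := by
  have hwalk : ∀ u ∈ At, ∀ v ∈ At, ∃ p : G.Walk u v,
      (∀ w ∈ p.support, w ∈ At) ∧ (p.length : ℝ) ≤ 2 * (r * (r + 1)) + (r - 1) := by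
    obtain rfl : At = G.cthickening {u | (t, u) ∈ 𝒞} (r * (r + 1)) := hAt
    exact fun u hu v hv => hG.exists_walk_within_cthickening (by nlinarith [sq_nonneg r])
      (fun a ha b hb => h𝒞.dist_le_sub_one_of_mem ha hb) hu hv
  exact ⟨fun u hu v hv => (hwalk u hu v hv).imp fun _ => And.left, hwalk⟩

/-- **Lemma 5.2.** Let `𝒞 ⊆ V(T) × V(G)` be a correspondence of stretch at most
`r` between a finite tree `T` and a finite connected graph `G`, and let
`A_t = B_G(r(r+1), 𝒞_{t,G})`. Then each `A_t` induces a connected subgraph of `G`;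
moreover any `u, v ∈ A_t` are joined by a path within `A_t` of length at most
`2r(r+1) + (r-1)`. -/
theorem ball_of_correspondence_connected (VG VT : Type) [Fintype VG] [Fintype VT]
    (G : SimpleGraph VG) (T : SimpleGraph VT) (hG : G.Connected) (hT : T.IsTree)
    (r : ℝ) (𝒞 : Set (VT × VG)) (h𝒞 : CorrespondenceStretchLE T G r 𝒞)
    (t : VT) (At : Set VG)
    (hAt : At = {v | ∃ u, (t, u) ∈ 𝒞 ∧ (G.dist v u : ℝ) ≤ r * (r + 1)}) :
    ConnIn G At ∧
      ∀ u ∈ At, ∀ v ∈ At, ∃ p : G.Walk u v,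
        (∀ w ∈ p.support, w ∈ At) ∧ (p.length : ℝ) ≤ 2 * (r * (r + 1)) + (r - 1) :=
  ball_of_correspondence_connected_general VG VT G T hG r 𝒞 h𝒞 t At hAt
end
end

section
/- Let G be a finite connected graph, T a finite tree, and 𝒞⊂V(T)×V(G) a correspondence with stretch at most r, and for t∈V(T) let A_t = B_G(r(r+1), 𝒞_{t,G}). Then for all distinct a,b,t∈V(T), if t lies on the unique path in T from a to b, then every path in G from 𝒞_{a,G} to 𝒞_{b,G} contains a vertex of A_t. -/
open Finset

noncomputable section

/-! The walk in `G` has two consecutive vertices `z, z'` with correspondents `w, w'` in `T` such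
that `t` separates `w` from `b` but not `w'` from `b`. Then `t` lies on a geodesic from `w` to `w'`,
whose length is at most `2r - 1` by the stretch bound, so `t` is within `r` of `w` or of `w'`, and
the stretch bound again puts `z` or `z'` within `r(r+1)` of `𝒞_{t,G}`. -/

namespace SimpleGraph

variable {V W : Type}

lemma Reachable.dist_add_dist_le_of_forall_mem_support [DecidableEq V] {G : SimpleGraph V}
    {w w' b t : V} (hr : G.Reachable w w') (hw : ∀ p : G.Walk w b, t ∈ p.support)
    (p' : G.Walk w' b) (hp' : t ∉ p'.support) :
    G.dist w t + G.dist t w' ≤ G.dist w w' := by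
  obtain ⟨p, -, hlen⟩ := hr.exists_path_of_dist
  have ht : t ∈ p.support := by
    have := hw (p.append p')
    rw [Walk.mem_support_append_iff] at this
    tauto
  calc G.dist w t + G.dist t w'
      ≤ (p.takeUntil t ht).length + (p.dropUntil t ht).length :=
        add_le_add (dist_le _) (dist_le _)
    _ = G.dist w w' := by rw [← Walk.length_append, Walk.take_spec, hlen]

/-- A discrete intermediate value theorem along a walk. -/
lemma Walk.exists_crossing {G : SimpleGraph W} {𝒞 : Set (V × W)}
    (h𝒞 : ∀ z, ∃ v, (v, z) ∈ 𝒞) (P : V → Prop) {x y : W} (q : G.Walk x y) {a b : V}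
    (ha : (a, x) ∈ 𝒞) (hPa : ¬ P a) (hb : (b, y) ∈ 𝒞) (hPb : P b) :
    ∃ z ∈ q.support, ∃ z' ∈ q.support, G.dist z z' ≤ 1 ∧
      ∃ v v', (v, z) ∈ 𝒞 ∧ (v', z') ∈ 𝒞 ∧ ¬ P v ∧ P v' := by
  induction q generalizing a with
  | nil => exact ⟨_, by simp, _, by simp, by simp, a, b, ha, hb, hPa, hPb⟩
  | @cons x x₁ y hadj q ih =>
    obtain ⟨a₁, ha₁⟩ := h𝒞 x₁
    by_cases hPa₁ : P a₁
    · exact ⟨x, by simp, x₁, by simp, (dist_eq_one_iff_adj.mpr hadj).le,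
        a, a₁, ha, ha₁, hPa, hPa₁⟩
    · obtain ⟨z, hz, z', hz', h⟩ := ih ha₁ hPa₁ hb
      exact ⟨z, by simp [hz], z', by simp [hz'], h⟩

end SimpleGraph

namespace CorrespondenceStretchLE

variable {V W : Type} {G : SimpleGraph V} {H : SimpleGraph W} {r : ℝ} {𝒞 : Set (V × W)}

lemma one_le (h : CorrespondenceStretchLE G H r 𝒞) {v : V} {v' : W} (hv : (v, v') ∈ 𝒞) :
    1 ≤ r := by
  simpa using h.2.2 _ hv _ hv

lemma dist_fst_add_one_le (h : CorrespondenceStretchLE G H r 𝒞) {v w : V} {v' w' : W}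
    (hv : (v, v') ∈ 𝒞) (hw : (w, w') ∈ 𝒞) :
    (G.dist v w : ℝ) + 1 ≤ r * (H.dist v' w' + 1) :=
  calc (G.dist v w : ℝ) + 1 ≤ max (G.dist v w : ℝ) (H.dist v' w') + 1 := by
        gcongr; exact le_max_left _ _
    _ ≤ r * (min (G.dist v w : ℝ) (H.dist v' w') + 1) := by exact_mod_cast h.2.2 _ hv _ hw
    _ ≤ r * (H.dist v' w' + 1) := by
      gcongr
      · linarith [h.one_le hv]
      · exact min_le_right _ _

lemma dist_snd_add_one_le (h : CorrespondenceStretchLE G H r 𝒞) {v w : V} {v' w' : W}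
    (hv : (v, v') ∈ 𝒞) (hw : (w, w') ∈ 𝒞) :
    (H.dist v' w' : ℝ) + 1 ≤ r * (G.dist v w + 1) :=
  calc (H.dist v' w' : ℝ) + 1 ≤ max (G.dist v w : ℝ) (H.dist v' w') + 1 := by
        gcongr; exact le_max_right _ _
    _ ≤ r * (min (G.dist v w : ℝ) (H.dist v' w') + 1) := by exact_mod_cast h.2.2 _ hv _ hw
    _ ≤ r * (G.dist v w + 1) := by
      gcongr
      · linarith [h.one_le hv]
      · exact min_le_left _ _

end CorrespondenceStretchLE

theorem correspondence_cut_general (VG VT : Type)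
    (G : SimpleGraph VG) (T : SimpleGraph VT) (hT : T.IsTree)
    (r : ℝ) (𝒞 : Set (VT × VG)) (h𝒞 : CorrespondenceStretchLE T G r 𝒞)
    (a b t : VT) (hbt : b ≠ t)
    (hpath : ∀ p : T.Walk a b, p.IsPath → t ∈ p.support)
    (x y : VG) (hx : (a, x) ∈ 𝒞) (hy : (b, y) ∈ 𝒞) (q : G.Walk x y) :
    ∃ z ∈ q.support, z ∈ {v : VG | ∃ u, (t, u) ∈ 𝒞 ∧ (G.dist v u : ℝ) ≤ r * (r + 1)} := by
  classical
  have hPa : ¬ ∃ p : T.Walk a b, t ∉ p.support := fun ⟨p, hp⟩ =>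
    hp (p.support_bypass_subset_support (hpath _ p.bypass_isPath))
  have hPb : ∃ p : T.Walk b b, t ∉ p.support := ⟨.nil, by simpa using hbt.symm⟩
  obtain ⟨z, hz, z', hz', hzz', w, w', hw, hw', hPw, p', hp'⟩ :=
    q.exists_crossing h𝒞.2.1 (fun w => ∃ p : T.Walk w b, t ∉ p.support) hx hPa hy hPb
  simp only [not_exists, not_not] at hPw
  have hsplit : (T.dist w t + T.dist t w' : ℝ) ≤ T.dist w w' := by
    exact_mod_cast (hT.connected w w').dist_add_dist_le_of_forall_mem_support hPw p' hp'
  have hww' : (T.dist w w' : ℝ) + 1 ≤ r * (1 + 1) := by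
    refine (h𝒞.dist_fst_add_one_le hw hw').trans ?_
    gcongr
    · linarith [h𝒞.one_le hx]
    · exact_mod_cast hzz'
  obtain ⟨u, hu⟩ := h𝒞.1 t
  have hnear : ∀ v z, (v, z) ∈ 𝒞 → (T.dist v t : ℝ) ≤ r →
      (G.dist z u : ℝ) ≤ r * (r + 1) := fun v z hv hvt => by
    nlinarith [h𝒞.dist_snd_add_one_le hv hu, h𝒞.one_le hv]
  rcases le_total (T.dist w t) (T.dist t w') with h | h
  · have h : (T.dist w t : ℝ) ≤ T.dist t w' := by exact_mod_cast h
    exact ⟨z, hz, u, hu, hnear w z hw (by linarith)⟩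
  · have h : (T.dist t w' : ℝ) ≤ T.dist w t := by exact_mod_cast h
    refine ⟨z', hz', u, hu, hnear w' z' hw' ?_⟩
    rw [SimpleGraph.dist_comm]
    linarith

/-- **Lemma 5.3.** Let `𝒞 ⊆ V(T) × V(G)` be a correspondence of stretch at most
`r` between a finite tree `T` and a finite connected graph `G`, and let
`A_t = B_G(r(r+1), 𝒞_{t,G})`. If `a, b, t` are distinct vertices of `T` and `t`
lies on the unique path in `T` from `a` to `b`, then every path in `G` from
`𝒞_{a,G}` to `𝒞_{b,G}` contains a vertex of `A_t`. -/
theorem correspondence_cut (VG VT : Type) [Fintype VG] [Fintype VT]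
    (G : SimpleGraph VG) (T : SimpleGraph VT) (hG : G.Connected) (hT : T.IsTree)
    (r : ℝ) (𝒞 : Set (VT × VG)) (h𝒞 : CorrespondenceStretchLE T G r 𝒞)
    (a b t : VT) (hab : a ≠ b) (hat : a ≠ t) (hbt : b ≠ t)
    (hpath : ∀ p : T.Walk a b, p.IsPath → t ∈ p.support)
    (x y : VG) (hx : (a, x) ∈ 𝒞) (hy : (b, y) ∈ 𝒞) (q : G.Walk x y) :
    ∃ z ∈ q.support, z ∈ {v : VG | ∃ u, (t, u) ∈ 𝒞 ∧ (G.dist v u : ℝ) ≤ r * (r + 1)} :=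
  correspondence_cut_general VG VT G T hT r 𝒞 h𝒞 a b t hbt hpath x y hx hy q
end
end

section
/- Let X be an irreducible lazy Markov chain on a finite state space V with stationary distribution π, let s∈V, let τ be a stopping rule from s to π, and let y_v be the scaled exit frequencies of τ. For any u,v∈V and m∈ℕ, if v is (1/m)-near to u, then y_v ≤ m(m+1)y_u + m²(m+1)/2. -/
open Finset

noncomputable section

/-!
The balance equations give `∑_w x_w (f - Pf)(w) = f(s) - π(f)` for every `f`. Test them against
`f(w) = ∑_{n<m} P_w(H(u) ≤ n)`: off `u`, telescoping gives `(f - Pf)(w) = -P_w(H(u) ≤ m)`; at `u`,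
laziness gives `(f - Pf)(u) ≤ m/2`; and stationarity gives `π(f) ≤ π(u) m(m+1)/2`. Hence
`x_v P_v(H(u) ≤ m) ≤ (m/2 + 1) x_u + π(u) m(m+1)/2`, while `(1/m)`-nearness says
`π(v) P_v(H(u) ≤ m) ≥ π(u)/m`.
-/

namespace MarkovChain

variable {V : Type} [Fintype V] [DecidableEq V] (X : MarkovChain V)

theorem sum_pi_mul_sum_P_mul (f : V → ℝ) :
    ∑ w, X.pi w * ∑ z, X.P w z * f z = ∑ z, X.pi z * f z := by
  simp_rw [Finset.mul_sum, ← mul_assoc]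
  rw [Finset.sum_comm]
  simp_rw [← Finset.sum_mul, X.pi_stat]

theorem IsExitMeasure.sum_mul_sub_sum_P_mul {X : MarkovChain V} {s : V} {x : V → ℝ}
    (hx : X.IsExitMeasure s x) (f : V → ℝ) :
    ∑ w, x w * (f w - ∑ z, X.P w z * f z) = f s - ∑ w, X.pi w * f w := by
  have hxP : ∑ w, x w * ∑ z, X.P w z * f z =
      ∑ z, (X.pi z * f z + x z * f z - if z = s then f z else 0) := by
    simp_rw [Finset.mul_sum, ← mul_assoc]
    rw [Finset.sum_comm]
    refine Finset.sum_congr rfl fun z _ => ?_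
    rw [← Finset.sum_mul, ← sub_eq_iff_eq_add'.mpr (hx.2 z).symm]
    split_ifs <;> ring
  rw [Finset.sum_congr rfl fun w _ => mul_sub (x w) _ _, Finset.sum_sub_distrib, hxP,
    Finset.sum_sub_distrib, Finset.sum_add_distrib, Finset.sum_ite_eq', if_pos (mem_univ s)]
  ring

theorem hitProbLE_nonneg (n : ℕ) (w u : V) : 0 ≤ X.hitProbLE n w u := by
  induction n generalizing w with
  | zero =>
    unfold hitProbLE
    split_ifs <;> norm_num
  | succ n ih =>
    unfold hitProbLE
    split_ifs
    · norm_num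
    · exact Finset.sum_nonneg fun z _ => mul_nonneg (X.P_nonneg w z) (ih z)

@[simp]
theorem hitProbLE_self (n : ℕ) (u : V) : X.hitProbLE n u u = 1 := by
  cases n <;> simp [hitProbLE]

theorem hitProbLE_succ_of_ne {w u : V} (h : w ≠ u) (n : ℕ) :
    X.hitProbLE (n + 1) w u = ∑ z, X.P w z * X.hitProbLE n z u := by
  simp [hitProbLE, h]

theorem hitProbLE_succ_le (n : ℕ) (w u : V) :
    X.hitProbLE (n + 1) w u ≤ (if w = u then 1 else 0) + ∑ z, X.P w z * X.hitProbLE n z u := by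
  by_cases h : w = u
  · subst h
    simpa using Finset.sum_nonneg fun z _ => mul_nonneg (X.P_nonneg w z) (X.hitProbLE_nonneg n z w)
  · simp [X.hitProbLE_succ_of_ne h, h]

theorem sum_pi_mul_hitProbLE_le (n : ℕ) (u : V) :
    ∑ w, X.pi w * X.hitProbLE n w u ≤ (n + 1) * X.pi u := by
  induction n with
  | zero => simp [hitProbLE]
  | succ n ih =>
    calc ∑ w, X.pi w * X.hitProbLE (n + 1) w u
        ≤ ∑ w, X.pi w * ((if w = u then 1 else 0) + ∑ z, X.P w z * X.hitProbLE n z u) :=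
          Finset.sum_le_sum fun w _ =>
            mul_le_mul_of_nonneg_left (X.hitProbLE_succ_le n w u) (X.pi_pos w).le
      _ = X.pi u + ∑ w, X.pi w * X.hitProbLE n w u := by
          simp_rw [mul_add, Finset.sum_add_distrib, X.sum_pi_mul_sum_P_mul]
          simp
      _ ≤ (↑(n + 1) + 1) * X.pi u := by
          push_cast
          linarith

/-- `∑_{n < m} P_w(H(u) ≤ n) = E_w[(m - H(u))⁺]`. -/
def hitProbSum (m : ℕ) (w u : V) : ℝ := ∑ n ∈ range m, X.hitProbLE n w u

theorem hitProbSum_nonneg (m : ℕ) (w u : V) : 0 ≤ X.hitProbSum m w u :=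
  Finset.sum_nonneg fun n _ => X.hitProbLE_nonneg n w u

theorem hitProbSum_sub_sum_P_mul_of_ne {w u : V} (h : w ≠ u) (m : ℕ) :
    X.hitProbSum m w u - ∑ z, X.P w z * X.hitProbSum m z u = -X.hitProbLE m w u := by
  simp_rw [hitProbSum, Finset.mul_sum]
  rw [Finset.sum_comm, ← Finset.sum_sub_distrib]
  simp_rw [← X.hitProbLE_succ_of_ne h]
  rw [Finset.sum_range_sub' (fun n => X.hitProbLE n w u)]
  simp [hitProbLE, h]

theorem hitProbSum_self_sub_sum_P_mul_le (m : ℕ) (u : V) :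
    X.hitProbSum m u u - ∑ z, X.P u z * X.hitProbSum m z u ≤ m * (1 - X.P u u) := by
  have hstay : X.P u u * X.hitProbSum m u u ≤ ∑ z, X.P u z * X.hitProbSum m z u :=
    Finset.single_le_sum (f := fun z => X.P u z * X.hitProbSum m z u)
      (fun z _ => mul_nonneg (X.P_nonneg u z) (X.hitProbSum_nonneg m z u)) (mem_univ u)
  have hself : X.hitProbSum m u u = m := by simp [hitProbSum]
  rw [hself] at hstay ⊢
  linarith

theorem sum_pi_mul_hitProbSum_le (m : ℕ) (u : V) :
    ∑ w, X.pi w * X.hitProbSum m w u ≤ m * (m + 1) / 2 * X.pi u := by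
  have hgauss : ∑ n ∈ range m, ((n : ℝ) + 1) = m * (m + 1) / 2 := by
    induction m with
    | zero => simp
    | succ m ih =>
      rw [Finset.sum_range_succ, ih]
      push_cast
      ring
  simp_rw [hitProbSum, Finset.mul_sum]
  rw [Finset.sum_comm, ← hgauss, Finset.sum_mul]
  exact Finset.sum_le_sum fun n _ => X.sum_pi_mul_hitProbLE_le n u

theorem IsExitMeasure.sum_mul_hitProbLE_le {X : MarkovChain V} {s : V} {x : V → ℝ}
    (hx : X.IsExitMeasure s x) (m : ℕ) (u : V) :
    ∑ w, x w * X.hitProbLE m w u ≤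
      x u * (m * (1 - X.P u u) + 1) + m * (m + 1) / 2 * X.pi u := by
  have hid := hx.sum_mul_sub_sum_P_mul (X.hitProbSum m · u)
  have hlocal : ∑ w, x w * (X.hitProbSum m w u - ∑ z, X.P w z * X.hitProbSum m z u +
      X.hitProbLE m w u) = x u * (X.hitProbSum m u u - ∑ z, X.P u z * X.hitProbSum m z u + 1) := by
    rw [Finset.sum_eq_single u (fun w _ hw => by rw [X.hitProbSum_sub_sum_P_mul_of_ne hw]; ring)
      (by simp)]
    simp
  simp_rw [mul_add, Finset.sum_add_distrib] at hlocal
  have hu := mul_le_mul_of_nonneg_left (X.hitProbSum_self_sub_sum_P_mul_le m u) (hx.1 u)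
  linarith [X.hitProbSum_nonneg m s u, X.sum_pi_mul_hitProbSum_le m u]

end MarkovChain

theorem near_exit_frequency_bound_general {V : Type} [Fintype V] [DecidableEq V]
    (X : MarkovChain V) (hlazy : X.Lazy)
    (s : V) (x : V → ℝ) (hx : X.IsExitMeasure s x)
    (u v : V) (m : ℕ) (hm : 0 < m) (hnear : X.Near (1 / (m : ℝ)) v u) :
    x v / X.pi v ≤ (m : ℝ) * ((m : ℝ) + 1) * (x u / X.pi u) +
      (m : ℝ) ^ 2 * ((m : ℝ) + 1) / 2 := by
  have hnear' : 1 / (m : ℝ) * X.pi u ≤ X.pi v * X.hitProbLE m v u := by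
    simpa [MarkovChain.Near, Nat.floor_natCast] using hnear
  have hv : x v * X.hitProbLE m v u ≤ ∑ w, x w * X.hitProbLE m w u :=
    Finset.single_le_sum (f := fun w => x w * X.hitProbLE m w u)
      (fun w _ => mul_nonneg (hx.1 w) (X.hitProbLE_nonneg m w u)) (mem_univ v)
  have hsum := hx.sum_mul_hitProbLE_le m u
  rw [hlazy u] at hsum
  have hyv : x v / X.pi v * (1 / m * X.pi u) ≤ x v * X.hitProbLE m v u := by
    calc x v / X.pi v * (1 / m * X.pi u)
        ≤ x v / X.pi v * (X.pi v * X.hitProbLE m v u) :=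
          mul_le_mul_of_nonneg_left hnear' (div_nonneg (hx.1 v) (X.pi_pos v).le)
      _ = x v * X.hitProbLE m v u := by field_simp [(X.pi_pos v).ne']
  have hm' : (0 : ℝ) < m := by exact_mod_cast hm
  have hπu := X.pi_pos u
  rw [← mul_le_mul_iff_of_pos_right (by positivity : (0 : ℝ) < 1 / m * X.pi u)]
  have hrhs : ((m : ℝ) * (m + 1) * (x u / X.pi u) + (m : ℝ) ^ 2 * (m + 1) / 2) *
      (1 / m * X.pi u) = (m + 1) * x u + m * (m + 1) / 2 * X.pi u := by
    field_simp
  rw [hrhs]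
  nlinarith [hx.1 u]

/-- **Lemma 6.2.** Let `x` be the exit frequencies of a stopping rule from `s` to
`π`, with scaled exit frequencies `y v = x v / π v`. If `v` is `(1/m)`-near to `u`
for some `m ∈ ℕ`, then `y_v ≤ m(m+1) y_u + m²(m+1)/2`. -/
theorem near_exit_frequency_bound {V : Type} [Fintype V] [DecidableEq V]
    (X : MarkovChain V) (hirr : X.Irreducible) (hlazy : X.Lazy)
    (s : V) (x : V → ℝ) (hx : X.IsExitMeasure s x)
    (u v : V) (m : ℕ) (hm : 0 < m) (hnear : X.Near (1 / (m : ℝ)) v u) :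
    x v / X.pi v ≤ (m : ℝ) * ((m : ℝ) + 1) * (x u / X.pi u) +
      (m : ℝ) ^ 2 * ((m : ℝ) + 1) / 2 :=
  near_exit_frequency_bound_general X hlazy s x hx u v m hm hnear
end
end

section
/- Let T be a finite tree with |V(T)| ≥ 2 and maximum degree at most Δ. Then there exists a set A ⊂ V(T) such that both A and A^c induce connected subgraphs of T, |A| ≥ |V(T)|/(4Δ), and |A^c| ≥ |V(T)|/2. -/
open Finset

noncomputable section

/-!
Pick a centroid `v` of the tree: a vertex each of whose branches (components of `T - v`) has at
most `n / 2` vertices. The `n - 1` vertices other than `v` are spread over at most `Δ` branches,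
so the largest branch `A` has at least `(n - 1) / Δ ≥ n / (4 Δ)` vertices, while `Aᶜ` has at
least `n / 2`. Both `A` and `Aᶜ` are the two sides of the edge from `v` into `A`, and the sides of
an edge are connected.
-/

lemma connIn_of_forall_walk {V : Type} {G : SimpleGraph V} {A : Set V} (c : V)
    (h : ∀ x ∈ A, ∃ p : G.Walk x c, ∀ z ∈ p.support, z ∈ A) : ConnIn G A := by
  intro x hx y hy
  obtain ⟨p, hp⟩ := h x hx
  obtain ⟨q, hq⟩ := h y hy
  refine ⟨p.append q.reverse, fun z hz => ?_⟩
  rw [SimpleGraph.Walk.mem_support_append_iff, SimpleGraph.Walk.support_reverse,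
    List.mem_reverse] at hz
  exact hz.elim (hp z) (hq z)

lemma DegLE.degree_le {V : Type} [Fintype V] {G : SimpleGraph V} [DecidableRel G.Adj] {Δ : ℕ}
    (h : DegLE G Δ) (v : V) : G.degree v ≤ Δ := by
  rw [← G.card_neighborSet_eq_degree, ← Nat.card_eq_fintype_card, Nat.card_coe_set_eq]
  exact h v

namespace SimpleGraph

variable {V : Type} {G : SimpleGraph V}

lemma Walk.dist_add_dist_le_length {x y z : V} (p : G.Walk x y) (hz : z ∈ p.support) :
    G.dist x z + G.dist z y ≤ p.length := by
  classical
  calc G.dist x z + G.dist z y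
      ≤ (p.takeUntil z hz).length + (p.dropUntil z hz).length := add_le_add (dist_le _) (dist_le _)
    _ = p.length := by rw [← Walk.length_append, p.take_spec hz]

lemma IsTree.eq_of_adj_of_dist_lt (hT : G.IsTree) {x u v w : V} (hu : G.Adj v u)
    (hw : G.Adj v w) (hxu : G.dist x u < G.dist x v) (hxw : G.dist x w < G.dist x v) :
    u = w := by
  obtain ⟨p, hp, -⟩ := hT.connected.exists_path_of_dist x v
  have penultimate_of_closer {y : V} (hy : G.Adj v y) (hxy : G.dist x y < G.dist x v) :
      y = p.penultimate := by
    obtain ⟨q, hq, hql⟩ := hT.connected.exists_path_of_dist x y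
    have hv : v ∉ q.support := fun hv => by
      have := q.dist_add_dist_le_length hv
      omega
    exact hT.isAcyclic.eq_penultimate_of_adj_end hp hy
      (hT.isAcyclic.mem_support_of_ne_mem_support_of_adj_of_isPath hp hq hy hv)
  rw [penultimate_of_closer hu hxu, penultimate_of_closer hw hxw]

variable [Fintype V]

/-- For an edge `uv` of a tree, the vertex set of the component of `T - uv` containing `v`. -/
def branch (G : SimpleGraph V) (u v : V) : Finset V := {x | G.dist x v < G.dist x u}

lemma mem_branch {u v x : V} : x ∈ G.branch u v ↔ G.dist x v < G.dist x u := by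
  simp [branch]

lemma Adj.mem_branch {u v : V} (h : G.Adj u v) : v ∈ G.branch u v := by
  simp [SimpleGraph.mem_branch, dist_eq_one_iff_adj.mpr h.symm]

lemma notMem_branch_left {u v : V} : u ∉ G.branch u v := by
  simp [mem_branch]

/-- Geodesics towards `v` never leave `G.branch u v`. -/
lemma Connected.connIn_branch (hc : G.Connected) (u v : V) :
    ConnIn G (G.branch u v : Set V) := by
  refine connIn_of_forall_walk v fun x hx => ?_
  obtain ⟨p, hp⟩ := hc.exists_walk_length_eq_dist x v
  refine ⟨p, fun z hz => ?_⟩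
  have hsplit := p.dist_add_dist_le_length hz
  have htri : G.dist x u ≤ G.dist x z + G.dist z u := hc.dist_triangle
  simp only [Finset.mem_coe, mem_branch] at hx ⊢
  omega

lemma Connected.exists_adj_mem_branch (hc : G.Connected) {v x : V} (hx : x ≠ v) :
    ∃ w, G.Adj v w ∧ x ∈ G.branch v w := by
  obtain ⟨p, hp⟩ := hc.exists_walk_length_eq_dist v x
  cases p with
  | nil => exact absurd rfl hx
  | cons hvw q =>
    refine ⟨_, hvw, mem_branch.mpr ?_⟩
    rw [dist_comm, dist_comm (u := x), ← hp, Walk.length_cons]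
    exact Nat.lt_succ_of_le (dist_le q)

lemma IsTree.compl_branch [DecidableEq V] (hT : G.IsTree) {u v : V} (h : G.Adj u v) :
    (G.branch u v)ᶜ = G.branch v u := by
  ext x
  have := hT.dist_ne_of_adj x h
  simp only [Finset.mem_compl, mem_branch]
  omega

lemma IsTree.branch_subset_branch (hT : G.IsTree) {u v w : V} (hu : G.Adj v u)
    (hw : G.Adj v w) (huw : u ≠ w) : G.branch v w ⊆ G.branch u v := by
  intro x hx
  rw [mem_branch] at hx ⊢
  rcases hT.dist_eq_dist_add_one_of_adj x hu with h | h
  · exact absurd (hT.eq_of_adj_of_dist_lt hu hw (by omega) hx) huw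
  · omega

/-- A minimal directed edge `uv` whose branch is larger than half the tree cannot exist: the large
branch at `v` is either `G.branch v u`, the complement, or a proper subset of `G.branch u v`. -/
theorem IsTree.exists_centroid (hT : G.IsTree) :
    ∃ v, ∀ w, G.Adj v w → 2 * #(G.branch v w) ≤ Fintype.card V := by
  classical
  by_contra! hbig
  obtain ⟨v₀⟩ := hT.connected.nonempty
  let S : Finset (V × V) := {e | G.Adj e.1 e.2 ∧ Fintype.card V < 2 * #(G.branch e.1 e.2)}
  have hS : S.Nonempty := by
    obtain ⟨w, hw⟩ := hbig v₀
    exact ⟨(v₀, w), by simpa [S] using hw⟩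
  obtain ⟨⟨u, v⟩, huv, hmin⟩ := S.exists_min_image (fun e => #(G.branch e.1 e.2)) hS
  simp only [S, mem_filter, mem_univ, true_and] at huv
  obtain ⟨w, hvw, hw⟩ := hbig v
  by_cases hwu : w = u
  · subst hwu
    have := card_add_card_compl (G.branch w v)
    rw [hT.compl_branch huv.1] at this
    omega
  · have hlt : #(G.branch v w) < #(G.branch u v) :=
      card_lt_card ⟨hT.branch_subset_branch huv.1.symm hvw (Ne.symm hwu),
        fun h => notMem_branch_left (h huv.1.mem_branch)⟩
    have := hmin (v, w) (by simpa [S] using ⟨hvw, hw⟩)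
    simp only at this
    omega

theorem Connected.exists_card_le_degree_mul_card_branch [DecidableRel G.Adj] (hc : G.Connected)
    (hn : 2 ≤ Fintype.card V) (v : V) :
    ∃ w, G.Adj v w ∧ Fintype.card V ≤ G.degree v * #(G.branch v w) + 1 := by
  classical
  have hcover : univ.erase v ⊆ (G.neighborFinset v).biUnion (G.branch v) := by
    intro x hx
    obtain ⟨w, hvw, hxw⟩ := hc.exists_adj_mem_branch (ne_of_mem_erase hx)
    exact mem_biUnion.mpr ⟨w, (G.mem_neighborFinset v w).mpr hvw, hxw⟩
  obtain ⟨x, hxv⟩ := Fintype.exists_ne_of_one_lt_card hn v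
  obtain ⟨w₀, hw₀, -⟩ := hc.exists_adj_mem_branch hxv
  obtain ⟨w, hw, hmax⟩ := (G.neighborFinset v).exists_max_image (fun w => #(G.branch v w))
    ⟨w₀, (G.mem_neighborFinset v w₀).mpr hw₀⟩
  refine ⟨w, (G.mem_neighborFinset v w).mp hw, ?_⟩
  calc Fintype.card V = #(univ.erase v) + 1 := by
        rw [card_erase_of_mem (mem_univ v), card_univ]
        omega
    _ ≤ ∑ w' ∈ G.neighborFinset v, #(G.branch v w') + 1 := by
        gcongr
        exact (card_le_card hcover).trans card_biUnion_le
    _ ≤ G.degree v * #(G.branch v w) + 1 := by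
        gcongr
        rw [← card_neighborFinset_eq_degree, ← smul_eq_mul]
        exact sum_le_card_nsmul _ _ _ hmax

end SimpleGraph

/-- **Lemma 7.7.** If `T` is a finite tree with at least two vertices and maximum
degree at most `Δ`, then there is a set `A` of vertices such that `A` and `Aᶜ`
both induce connected subgraphs, `|A| ≥ |V(T)|/(4Δ)` and `|Aᶜ| ≥ |V(T)|/2`. -/
theorem tree_balanced_cut (V : Type) [Fintype V] [DecidableEq V]
    (T : SimpleGraph V) (hT : T.IsTree) (h2 : 2 ≤ Fintype.card V)
    (Δ : ℕ) (hΔ : DegLE T Δ) :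
    ∃ A : Finset V, ConnIn T (A : Set V) ∧ ConnIn T ((Aᶜ : Finset V) : Set V) ∧
      (Fintype.card V : ℝ) / (4 * Δ) ≤ (A.card : ℝ) ∧
      (Fintype.card V : ℝ) / 2 ≤ ((Aᶜ : Finset V).card : ℝ) := by
  classical
  have hc := hT.connected
  obtain ⟨v, hcentroid⟩ := hT.exists_centroid
  obtain ⟨w, hvw, hlarge⟩ := hc.exists_card_le_degree_mul_card_branch h2 v
  have hdeg : T.degree v ≤ Δ := hΔ.degree_le v
  have hΔpos : 0 < Δ := ((T.degree_pos_iff_exists_adj v).mpr ⟨w, hvw⟩).trans_le hdeg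
  have hhalf := hcentroid w hvw
  refine ⟨T.branch v w, hc.connIn_branch v w, ?_, ?_, ?_⟩
  · rw [hT.compl_branch hvw]
    exact hc.connIn_branch w v
  · rw [div_le_iff₀ (by positivity)]
    have : Fintype.card V ≤ #(T.branch v w) * (4 * Δ) := by
      nlinarith [Nat.mul_le_mul_right #(T.branch v w) hdeg]
    exact_mod_cast this
  · rw [div_le_iff₀ two_pos]
    have : Fintype.card V ≤ #(T.branch v w)ᶜ * 2 := by
      rw [card_compl]
      omega
    exact_mod_cast this
end
end
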